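/- arXiv:2202.09158 — 18 statements merged into one kernel-verified Lean document; each statement's English description precedes it below -/
import Mathlib

section
/- Let X be a finite type and let P be a positive probability distribution on X^V × X^I for disjoint finite sets V, I. Define the conditional probabilities Q_V^y(x) = P(x,y)/Σ_{α} P(α,y) and Q_I^x(y) = P(x,y)/Σ_{β} P(x,β), and the marginal P_V(x) = Σ_y P(x,y). Then for every x ∈ X^V, P_V(x) = (Σ_{y ∈ X^I} Q_I^x(y)/Q_V^y(x))^{-1}. -/
/-- restoration formula (QP->P). For a positive probability
distribution `P` on `X^V × X^I`, with conditionals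
`Q_V^y(x) = P(x,y)/Σ_α P(α,y)` and `Q_I^x(y) = P(x,y)/Σ_β P(x,β)`,
the marginal `P_V(x) = Σ_y P(x,y)` satisfies
`P_V(x) = (Σ_y Q_I^x(y)/Q_V^y(x))⁻¹`. -/
theorem restoration_formula
    {X V I : Type*} [Fintype X] [Nonempty X]
    [Fintype V] [DecidableEq V] [Fintype I] [DecidableEq I]
    (P : (V → X) × (I → X) → ℝ)
    (hpos : ∀ p, 0 < P p) (hsum : ∑ p, P p = 1) :
    ∀ x : V → X,
      (∑ y : I → X, P (x, y))
        = (∑ y : I → X,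
            (P (x, y) / ∑ β : I → X, P (x, β)) /
            (P (x, y) / ∑ α : V → X, P (α, y)))⁻¹ := by
  intro x
  have hS : (0:ℝ) < ∑ β : I → X, P (x, β) :=
    Finset.sum_pos (fun β _ => hpos _) Finset.univ_nonempty
  have hterm : ∀ y : I → X,
      (P (x, y) / ∑ β : I → X, P (x, β)) /
        (P (x, y) / ∑ α : V → X, P (α, y))
      = (∑ α : V → X, P (α, y)) / ∑ β : I → X, P (x, β) := by
    intro y
    have hT : (0:ℝ) < ∑ α : V → X, P (α, y) :=
      Finset.sum_pos (fun α _ => hpos _) Finset.univ_nonempty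
    rw [div_div_div_comm, div_self (hpos (x, y)).ne', one_div, inv_div]
  rw [Finset.sum_congr rfl (fun y _ => hterm y), ← Finset.sum_div]
  have h1 : ∑ y : I → X, ∑ α : V → X, P (α, y) = 1 := by
    rw [← Fintype.sum_prod_type_right, hsum]
  rw [h1, one_div, inv_inv]
end

section
/- Let q be a positive f-specification, i.e., a family of positive probability distributions q_A^z on X^A indexed by finite sets A and boundary configurations z with support disjoint from A, satisfying q_{A∪B}^z(xy) = q_A^z(x)·q_B^{zx}(y) for disjoint A, B. Then for any disjoint finite sets V, I, any configurations x,u ∈ X^V, y,v ∈ X^I and any boundary condition z outside V∪I (possibly empty), the four-cycle identity holds: q_V^{zy}(x)·q_I^{zx}(v)·q_V^{zv}(u)·q_I^{zu}(y) = q_V^{zy}(u)·q_I^{zu}(v)·q_V^{zv}(x)·q_I^{zx}(y). -/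
/-- `setOn x A σ` is the configuration equal to `σ` on the finite set `A`
and to `x` elsewhere; it realizes a configuration `σ ∈ X^A` as a full
configuration (used for summation over `X^A`). -/
def setOn {S X : Type*} [DecidableEq S] (x : S → X) (A : Finset S)
    (σ : {u // u ∈ A} → X) : S → X :=
  fun u => if h : u ∈ A then σ ⟨u, h⟩ else x u

/-- `patch z A x` is the concatenation which equals `x` on `A` and `z` elsewhere:
it realizes the concatenated boundary condition `zx` (with `x ∈ X^A`). -/
def patch {S X : Type*} [DecidableEq S] (z : S → X) (A : Finset S) (x : S → X) : S → X :=
  fun u => if u ∈ A then x u else z u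

/-- A positive `f`-specification: to each finite set `A` and finite boundary set `B`
(disjoint from `A`) with boundary configuration `z` it assigns a positive probability
distribution `q A B z ·` on `X^A` (configurations are encoded as full functions `S → X`,
with `q A B z x` depending only on `z` on `B` and on `x` on `A`), satisfying the
consistency conditions `q_{A∪B}^z(xy) = q_A^z(x) · q_B^{zx}(y)`. -/
structure IsFSpec {S X : Type*} [DecidableEq S] [Fintype X]
    (q : Finset S → Finset S → (S → X) → (S → X) → ℝ) : Prop where
  isLocal : ∀ (A B : Finset S) (z z' x x' : S → X),
    (∀ u ∈ B, z u = z' u) → (∀ u ∈ A, x u = x' u) → q A B z x = q A B z' x'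
  pos : ∀ (A B : Finset S), Disjoint A B → ∀ z x, 0 < q A B z x
  sum_one : ∀ (A B : Finset S), Disjoint A B → ∀ z x,
    ∑ σ : {u // u ∈ A} → X, q A B z (setOn x A σ) = 1
  consistent : ∀ (A B C : Finset S), Disjoint A B → Disjoint A C → Disjoint B C →
    ∀ z x : S → X, q (A ∪ B) C z x = q A C z x * q B (C ∪ A) (patch z A x) x

/-- the four-cycle identity (Qf-4x4) for a positive `f`-specification:
for disjoint `V`, `I` and a boundary condition `z` on a set `Z` outside `V ∪ I`
(possibly empty, whence the lattice `S` is infinite),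
`q_V^{zy}(x) q_I^{zx}(v) q_V^{zv}(u) q_I^{zu}(y) = q_V^{zy}(u) q_I^{zu}(v) q_V^{zv}(x) q_I^{zx}(y)`. -/
theorem fspec_four_cycle {S X : Type*} [DecidableEq S] [Infinite S] [Fintype X] [Nonempty X]
    (q : Finset S → Finset S → (S → X) → (S → X) → ℝ) (hq : IsFSpec q)
    (V I Z : Finset S) (hVI : Disjoint V I) (hVZ : Disjoint V Z) (hIZ : Disjoint I Z)
    (z x u y v : S → X) :
    q V (Z ∪ I) (patch z I y) x * q I (Z ∪ V) (patch z V x) v *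
      q V (Z ∪ I) (patch z I v) u * q I (Z ∪ V) (patch z V u) y
    = q V (Z ∪ I) (patch z I y) u * q I (Z ∪ V) (patch z V u) v *
      q V (Z ∪ I) (patch z I v) x * q I (Z ∪ V) (patch z V x) y := by
  -- Key two-point identity: q_V^z(x) q_I^{zx}(y) = q_I^z(y) q_V^{zy}(x)
  have key : ∀ a b : S → X,
      q V Z z a * q I (Z ∪ V) (patch z V a) b
        = q I Z z b * q V (Z ∪ I) (patch z I b) a := by
    intro a b
    set w : S → X := fun s => if s ∈ V then a s else if s ∈ I then b s else z s with hw
    have hwV : ∀ s ∈ V, w s = a s := by intro s hs; simp [hw, hs]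
    have hwI : ∀ s ∈ I, w s = b s := by
      intro s hs
      have hsV : s ∉ V := Finset.disjoint_right.mp hVI hs
      simp [hw, hs, hsV]
    have h1 := hq.consistent V I Z hVI hVZ hIZ z w
    have h2 := hq.consistent I V Z hVI.symm hIZ hVZ z w
    rw [Finset.union_comm I V] at h2
    have e1 : q V Z z w = q V Z z a :=
      hq.isLocal V Z z z w a (fun _ _ => rfl) hwV
    have e2 : q I (Z ∪ V) (patch z V w) w = q I (Z ∪ V) (patch z V a) b := by
      refine hq.isLocal I (Z ∪ V) _ _ w b ?_ hwI
      intro s _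
      by_cases hs : s ∈ V <;> simp [patch, hs, hwV s]
    have e3 : q I Z z w = q I Z z b :=
      hq.isLocal I Z z z w b (fun _ _ => rfl) hwI
    have e4 : q V (Z ∪ I) (patch z I w) w = q V (Z ∪ I) (patch z I b) a := by
      refine hq.isLocal V (Z ∪ I) _ _ w a ?_ hwV
      intro s _
      by_cases hs : s ∈ I <;> simp [patch, hs, hwI s]
    rw [e1, e2] at h1
    rw [e3, e4] at h2
    rw [← h1, ← h2]
  have hby : 0 < q I Z z y := hq.pos I Z hIZ z y
  have hbv : 0 < q I Z z v := hq.pos I Z hIZ z v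
  apply mul_left_cancel₀ (ne_of_gt (mul_pos hby hbv))
  have kxy := key x y
  have kxv := key x v
  have kuv := key u v
  have kuy := key u y
  calc q I Z z y * q I Z z v *
        (q V (Z ∪ I) (patch z I y) x * q I (Z ∪ V) (patch z V x) v *
          q V (Z ∪ I) (patch z I v) u * q I (Z ∪ V) (patch z V u) y)
      = (q I Z z y * q V (Z ∪ I) (patch z I y) x) *
          (q I Z z v * q V (Z ∪ I) (patch z I v) u) *
          (q I (Z ∪ V) (patch z V x) v * q I (Z ∪ V) (patch z V u) y) := by ring
    _ = (q V Z z x * q I (Z ∪ V) (patch z V x) y) *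
          (q V Z z u * q I (Z ∪ V) (patch z V u) v) *
          (q I (Z ∪ V) (patch z V x) v * q I (Z ∪ V) (patch z V u) y) := by
        rw [← kxy, ← kuv]
    _ = (q V Z z u * q I (Z ∪ V) (patch z V u) y) *
          (q V Z z x * q I (Z ∪ V) (patch z V x) v) *
          (q I (Z ∪ V) (patch z V u) v * q I (Z ∪ V) (patch z V x) y) := by ring
    _ = (q I Z z y * q V (Z ∪ I) (patch z I y) u) *
          (q I Z z v * q V (Z ∪ I) (patch z I v) x) *
          (q I (Z ∪ V) (patch z V u) v * q I (Z ∪ V) (patch z V x) y) := by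
        rw [kuy, kxv]
    _ = q I Z z y * q I Z z v *
        (q V (Z ∪ I) (patch z I y) u * q I (Z ∪ V) (patch z V u) v *
          q V (Z ∪ I) (patch z I v) x * q I (Z ∪ V) (patch z V x) y) := by ring
end

section
/- Let q be a positive f-specification (family of positive probability distributions q_A^z on X^A with finite boundary conditions z, satisfying q_{A∪B}^z(xy) = q_A^z(x)·q_B^{zx}(y) for disjoint A,B). Then for any pairwise disjoint finite sets V, I, J and any x ∈ X^V, y ∈ X^I, w ∈ X^J: q_V^w(x)·q_I^x(y)·q_J^y(w) = q_I^w(y)·q_V^y(x)·q_J^x(w). -/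
/-- the three-cycle identity (Qf-3x3) for a positive `f`-specification:
for pairwise disjoint finite sets `V`, `I`, `J` and configurations `x ∈ X^V`,
`y ∈ X^I`, `w ∈ X^J`,
`q_V^w(x) q_I^x(y) q_J^y(w) = q_I^w(y) q_V^y(x) q_J^x(w)`. -/
theorem fspec_three_cycle {S X : Type*} [DecidableEq S] [Fintype X] [Nonempty X]
    (q : Finset S → Finset S → (S → X) → (S → X) → ℝ) (hq : IsFSpec q)
    (V I J : Finset S) (hVI : Disjoint V I) (hVJ : Disjoint V J) (hIJ : Disjoint I J)
    (x y w : S → X) :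
    q V J w x * q I V x y * q J I y w = q I J w y * q V I y x * q J V x w := by
  -- membership facts
  have hVnotI : ∀ s ∈ V, s ∉ I := fun s hs => Finset.disjoint_left.mp hVI hs
  have hVnotJ : ∀ s ∈ V, s ∉ J := fun s hs => Finset.disjoint_left.mp hVJ hs
  have hInotV : ∀ s ∈ I, s ∉ V := fun s hs => Finset.disjoint_right.mp hVI hs
  have hInotJ : ∀ s ∈ I, s ∉ J := fun s hs => Finset.disjoint_left.mp hIJ hs
  have hJnotV : ∀ s ∈ J, s ∉ V := fun s hs => Finset.disjoint_right.mp hVJ hs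
  have hJnotI : ∀ s ∈ J, s ∉ I := fun s hs => Finset.disjoint_right.mp hIJ hs
  -- combined boundary configurations
  set zxw : S → X := patch x J w with hzxw
  set zyw : S → X := patch y J w with hzyw
  set zxy : S → X := patch y V x with hzxy
  set A1 : ℝ := q I (V ∪ J) zxw y with hA1
  set B1 : ℝ := q V (I ∪ J) zyw x with hB1
  set C1 : ℝ := q J (V ∪ I) zxy w with hC1
  -- Equation (Ew): pair (V, I) with boundary J, config w
  have Ew : q V J w x * A1 = q I J w y * B1 := by
    have h1 := hq.consistent V I J hVI hVJ hIJ w zxy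
    have h2 := hq.consistent I V J hVI.symm hIJ hVJ w zxy
    rw [Finset.union_comm V I] at h1
    rw [h2] at h1
    have e1 : q V J w zxy = q V J w x :=
      hq.isLocal _ _ _ _ _ _ (fun u _ => rfl) (fun u hu => by simp [zxy, patch, hu])
    have e2 : q I (J ∪ V) (patch w V zxy) zxy = A1 := by
      rw [Finset.union_comm J V]
      refine hq.isLocal _ _ _ _ _ _ (fun u hu => ?_) (fun u hu => ?_)
      · rcases Finset.mem_union.mp hu with h | h
        · simp [patch, zxy, zxw, h, hVnotJ u h]
        · simp [patch, zxy, zxw, h, hJnotV u h]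
      · simp [zxy, patch, hInotV u hu]
    have e3 : q I J w zxy = q I J w y :=
      hq.isLocal _ _ _ _ _ _ (fun u _ => rfl)
        (fun u hu => by simp [zxy, patch, hInotV u hu])
    have e4 : q V (J ∪ I) (patch w I zxy) zxy = B1 := by
      rw [Finset.union_comm J I]
      refine hq.isLocal _ _ _ _ _ _ (fun u hu => ?_) (fun u hu => ?_)
      · rcases Finset.mem_union.mp hu with h | h
        · simp [patch, zxy, zyw, h, hInotV u h, hInotJ u h]
        · simp [patch, zxy, zyw, h, hJnotI u h]
      · simp [zxy, patch, hu]
    rw [e1, e2, e3, e4] at h1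
    exact h1.symm
  -- Equation (Ex): pair (I, J) with boundary V, config x
  have Ex : q I V x y * C1 = q J V x w * A1 := by
    have h1 := hq.consistent I J V hIJ hVI.symm hVJ.symm x zyw
    have h2 := hq.consistent J I V hIJ.symm hVJ.symm hVI.symm x zyw
    rw [Finset.union_comm I J] at h1
    rw [h2] at h1
    have e1 : q I V x zyw = q I V x y :=
      hq.isLocal _ _ _ _ _ _ (fun u _ => rfl)
        (fun u hu => by simp [zyw, patch, hInotJ u hu])
    have e2 : q J (V ∪ I) (patch x I zyw) zyw = C1 := by
      refine hq.isLocal _ _ _ _ _ _ (fun u hu => ?_) (fun u hu => ?_)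
      · rcases Finset.mem_union.mp hu with h | h
        · simp [patch, zyw, zxy, h, hVnotI u h]
        · simp [patch, zyw, zxy, h, hInotV u h, hInotJ u h]
      · simp [zyw, patch, hu]
    have e3 : q J V x zyw = q J V x w :=
      hq.isLocal _ _ _ _ _ _ (fun u _ => rfl)
        (fun u hu => by simp [zyw, patch, hu])
    have e4 : q I (V ∪ J) (patch x J zyw) zyw = A1 := by
      refine hq.isLocal _ _ _ _ _ _ (fun u hu => ?_) (fun u hu => ?_)
      · rcases Finset.mem_union.mp hu with h | h
        · simp [patch, zyw, zxw, h, hVnotJ u h]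
        · simp [patch, zyw, zxw, h]
      · simp [zyw, patch, hInotJ u hu]
    rw [e1, e2, e3, e4] at h1
    exact h1.symm
  -- Equation (Ey): pair (J, V) with boundary I, config y
  have Ey : q J I y w * B1 = q V I y x * C1 := by
    have h1 := hq.consistent J V I hVJ.symm hIJ.symm hVI y zxw
    have h2 := hq.consistent V J I hVJ hVI hIJ.symm y zxw
    rw [Finset.union_comm J V] at h1
    rw [h2] at h1
    have e1 : q J I y zxw = q J I y w :=
      hq.isLocal _ _ _ _ _ _ (fun u _ => rfl)
        (fun u hu => by simp [zxw, patch, hu])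
    have e2 : q V (I ∪ J) (patch y J zxw) zxw = B1 := by
      refine hq.isLocal _ _ _ _ _ _ (fun u hu => ?_) (fun u hu => ?_)
      · rcases Finset.mem_union.mp hu with h | h
        · simp [patch, zxw, zyw, h, hInotJ u h]
        · simp [patch, zxw, zyw, h]
      · simp [zxw, patch, hVnotJ u hu]
    have e3 : q V I y zxw = q V I y x :=
      hq.isLocal _ _ _ _ _ _ (fun u _ => rfl)
        (fun u hu => by simp [zxw, patch, hVnotJ u hu])
    have e4 : q J (I ∪ V) (patch y V zxw) zxw = C1 := by
      rw [Finset.union_comm I V]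
      refine hq.isLocal _ _ _ _ _ _ (fun u hu => ?_) (fun u hu => ?_)
      · rcases Finset.mem_union.mp hu with h | h
        · simp [patch, zxw, zxy, h, hVnotJ u h]
        · simp [patch, zxw, zxy, h, hInotV u h, hInotJ u h]
      · simp [zxw, patch, hu]
    rw [e1, e2, e3, e4] at h1
    exact h1.symm
  -- positivity of the cancellation factors
  have hA1pos : 0 < A1 :=
    hq.pos I (V ∪ J) (Finset.disjoint_union_right.mpr ⟨hVI.symm, hIJ⟩) _ _
  have hB1pos : 0 < B1 :=
    hq.pos V (I ∪ J) (Finset.disjoint_union_right.mpr ⟨hVI, hVJ⟩) _ _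
  have hC1pos : 0 < C1 :=
    hq.pos J (V ∪ I) (Finset.disjoint_union_right.mpr ⟨hVJ.symm, hIJ.symm⟩) _ _
  have hne : A1 * B1 * C1 ≠ 0 := by positivity
  have H : (q V J w x * A1) * ((q I V x y * C1) * (q J I y w * B1)) =
      (q I J w y * B1) * ((q J V x w * A1) * (q V I y x * C1)) := by
    rw [Ew, Ex, Ey]
  apply mul_right_cancel₀ hne
  linear_combination H
end

section
/- Let q be a positive f-specification and let V be a finite set. For y ∈ X^I and v ∈ X^I with I disjoint from V, define F(y)(x) = q_V^y(x)/q_I^x(y) · (Σ_{α ∈ X^V} q_V^y(α)/q_I^α(y))^{-1}. Then F(y) = F(v) for all y, v ∈ X^I; that is, the candidate marginal distribution P_V defined by formula (Q->P) does not depend on the choice of the boundary configuration y. -/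
section Helpers
variable {S X : Type*} [DecidableEq S] [Fintype X]

lemma key_four {q : Finset S → Finset S → (S → X) → (S → X) → ℝ} (hq : IsFSpec q)
    (V I : Finset S) (hVI : Disjoint V I) (y x : S → X) :
    q V I y x * q I ∅ x y = q V ∅ x x * q I V x y := by
  set w : S → X := patch y V x with hw
  have hwV : ∀ u ∈ V, w u = x u := by intro u hu; simp [hw, patch, hu]
  have hwI : ∀ u ∈ I, w u = y u := by
    intro u hu
    have : u ∉ V := fun h => (Finset.disjoint_left.mp hVI h) hu
    simp [hw, patch, this]
  have hpw : patch w V w = w := by funext u; simp [patch]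
  have hpwI : patch w I w = w := by funext u; simp [patch]
  have h1 := hq.consistent V I ∅ hVI (Finset.disjoint_empty_right V)
    (Finset.disjoint_empty_right I) w w
  have h2 := hq.consistent I V ∅ hVI.symm (Finset.disjoint_empty_right I)
    (Finset.disjoint_empty_right V) w w
  rw [hpw, Finset.empty_union] at h1
  rw [hpwI, Finset.empty_union] at h2
  have huc : q (V ∪ I) ∅ w w = q (I ∪ V) ∅ w w := by rw [Finset.union_comm]
  have hmain : q V ∅ w w * q I V w w = q I ∅ w w * q V I w w := by
    rw [← h1, ← h2, huc]
  have e1 : q V ∅ w w = q V ∅ x x := hq.isLocal _ _ _ _ _ _ (by simp) hwV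
  have e2 : q I V w w = q I V x y := hq.isLocal _ _ _ _ _ _ hwV hwI
  have e3 : q I ∅ w w = q I ∅ x y := hq.isLocal _ _ _ _ _ _ (by simp) hwI
  have e4 : q V I w w = q V I y x := hq.isLocal _ _ _ _ _ _ hwI hwV
  rw [e1, e2, e3, e4] at hmain
  linarith

lemma onebdry_expr {q : Finset S → Finset S → (S → X) → (S → X) → ℝ} (hq : IsFSpec q)
    (V I : Finset S) (hVI : Disjoint V I) (y x : S → X) :
    q V I y x / q I V x y *
        (∑ α : {u // u ∈ V} → X, q V I y (setOn x V α) / q I V (setOn x V α) y)⁻¹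
      = q V ∅ x x := by
  have hIe : (0:ℝ) < q I ∅ x y := hq.pos I ∅ (Finset.disjoint_empty_right I) x y
  have hIV : (0:ℝ) < q I V x y := hq.pos I V hVI.symm x y
  have hratio : ∀ s : S → X,
      q V I y s / q I V s y = q V ∅ x s / q I ∅ x y := by
    intro s
    have hk := key_four hq V I hVI y s
    have e3 : q I ∅ s y = q I ∅ x y := hq.isLocal _ _ _ _ _ _ (by simp) (fun u _ => rfl)
    have e1 : q V ∅ s s = q V ∅ x s := hq.isLocal _ _ _ _ _ _ (by simp) (fun u _ => rfl)
    rw [e3, e1] at hk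
    rw [div_eq_div_iff (ne_of_gt (hq.pos I V hVI.symm s y)) (ne_of_gt hIe)]
    linarith
  have hsum : (∑ α : {u // u ∈ V} → X, q V I y (setOn x V α) / q I V (setOn x V α) y)
      = (q I ∅ x y)⁻¹ := by
    rw [Finset.sum_congr rfl (fun α _ => hratio (setOn x V α)), ← Finset.sum_div,
      hq.sum_one V ∅ (Finset.disjoint_empty_right V) x x, one_div]
  rw [hsum, hratio x, inv_inv, div_mul_eq_mul_div,
    mul_div_assoc, div_self (ne_of_gt hIe), mul_one]

end Helpers

/-- the candidate marginal of formula (Q->P),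
`F(y)(x) = q_V^y(x)/q_I^x(y) · (Σ_{α ∈ X^V} q_V^y(α)/q_I^α(y))⁻¹`,
does not depend on the choice of the boundary configuration `y ∈ X^I`. -/
theorem candidate_marginal_indep_boundary {S X : Type*} [DecidableEq S] [Infinite S]
    [Fintype X] [Nonempty X]
    (q : Finset S → Finset S → (S → X) → (S → X) → ℝ) (hq : IsFSpec q)
    (V I : Finset S) (hVI : Disjoint V I) (y v x : S → X) :
    q V I y x / q I V x y *
        (∑ α : {u // u ∈ V} → X, q V I y (setOn x V α) / q I V (setOn x V α) y)⁻¹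
      = q V I v x / q I V x v *
        (∑ α : {u // u ∈ V} → X, q V I v (setOn x V α) / q I V (setOn x V α) v)⁻¹ := by
  rw [onebdry_expr hq V I hVI y x, onebdry_expr hq V I hVI v x]
end

section
/- Let q be a positive f-specification, let V, I, J be pairwise disjoint finite sets, y ∈ X^I, w ∈ X^J. Then for all x ∈ X^V: q_V^w(x)/q_J^x(w) · (Σ_{α∈X^V} q_V^w(α)/q_J^α(w))^{-1} = q_V^y(x)/q_I^x(y) · (Σ_{α∈X^V} q_V^y(α)/q_I^α(y))^{-1}. That is, the candidate marginal P_V of formula (Q->P) does not depend on the choice of the set supporting the boundary condition. -/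
/-- the candidate marginal `P_V` of formula (Q->P) does not depend on
the choice of the finite set supporting the boundary condition: for pairwise disjoint
`V`, `I`, `J` and configurations `y ∈ X^I`, `w ∈ X^J`,
`q_V^w(x)/q_J^x(w) · (Σ_α q_V^w(α)/q_J^α(w))⁻¹ = q_V^y(x)/q_I^x(y) · (Σ_α q_V^y(α)/q_I^α(y))⁻¹`. -/
theorem candidate_marginal_indep_support {S X : Type*} [DecidableEq S]
    [Fintype X] [Nonempty X]
    (q : Finset S → Finset S → (S → X) → (S → X) → ℝ) (hq : IsFSpec q)
    (V I J : Finset S) (hVI : Disjoint V I) (hVJ : Disjoint V J) (hIJ : Disjoint I J)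
    (y w x : S → X) :
    q V J w x / q J V x w *
        (∑ α : {u // u ∈ V} → X, q V J w (setOn x V α) / q J V (setOn x V α) w)⁻¹
      = q V I y x / q I V x y *
        (∑ α : {u // u ∈ V} → X, q V I y (setOn x V α) / q I V (setOn x V α) y)⁻¹ := by
  -- Key: the "two-cycle" identity gives q_A^B(x)/q_B^A(w) = q_A^∅(x)/q_B^∅(w).
  have key : ∀ (A B : Finset S), Disjoint A B → ∀ (w x : S → X),
      q A B w x / q B A x w = q A ∅ x x / q B ∅ w w := by
    intro A B hAB w x
    set η : S → X := patch w A x with hη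
    have hηA : ∀ u ∈ A, η u = x u := by intro u hu; simp [hη, patch, hu]
    have hηB : ∀ u ∈ B, η u = w u := by
      intro u hu
      have hu' : u ∉ A := Finset.disjoint_right.mp hAB hu
      simp [hη, patch, hu']
    have e1 : q A B w x = q A B η η :=
      hq.isLocal A B w η x η (fun u hu => (hηB u hu).symm) (fun u hu => (hηA u hu).symm)
    have e2 : q B A x w = q B A η η :=
      hq.isLocal B A x η w η (fun u hu => (hηA u hu).symm) (fun u hu => (hηB u hu).symm)
    have e3 : q A ∅ x x = q A ∅ η η :=
      hq.isLocal A ∅ x η x η (by simp) (fun u hu => (hηA u hu).symm)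
    have e4 : q B ∅ w w = q B ∅ η η :=
      hq.isLocal B ∅ w η w η (by simp) (fun u hu => (hηB u hu).symm)
    have hpA : patch η A η = η := by funext u; simp [patch]
    have hpB : patch η B η = η := by funext u; simp [patch]
    have c1 := hq.consistent A B ∅ hAB (Finset.disjoint_empty_right _)
      (Finset.disjoint_empty_right _) η η
    have c2 := hq.consistent B A ∅ hAB.symm (Finset.disjoint_empty_right _)
      (Finset.disjoint_empty_right _) η η
    rw [hpA, Finset.empty_union] at c1
    rw [hpB, Finset.empty_union] at c2
    have cyc : q A ∅ η η * q B A η η = q B ∅ η η * q A B η η := by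
      rw [← c1, ← c2, Finset.union_comm]
    have pA := hq.pos A ∅ (Finset.disjoint_empty_right _) η η
    have pB := hq.pos B ∅ (Finset.disjoint_empty_right _) η η
    have pAB := hq.pos A B hAB η η
    have pBA := hq.pos B A hAB.symm η η
    rw [e1, e2, e3, e4]
    field_simp
    linarith [cyc]
  -- Each side equals q V ∅ x x
  have main : ∀ (B : Finset S), Disjoint V B → ∀ w : S → X,
      q V B w x / q B V x w *
        (∑ α : {u // u ∈ V} → X, q V B w (setOn x V α) / q B V (setOn x V α) w)⁻¹
      = q V ∅ x x := by
    intro B hVB w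
    have hBpos := hq.pos B ∅ (Finset.disjoint_empty_right _) w w
    have hterm : ∀ α : {u // u ∈ V} → X,
        q V B w (setOn x V α) / q B V (setOn x V α) w
          = q V ∅ x (setOn x V α) / q B ∅ w w := by
      intro α
      rw [key V B hVB w (setOn x V α)]
      congr 1
      exact hq.isLocal V ∅ (setOn x V α) x _ _ (by simp) (fun u hu => rfl)
    have hsum : (∑ α : {u // u ∈ V} → X,
        q V B w (setOn x V α) / q B V (setOn x V α) w) = 1 / q B ∅ w w := by
      simp only [hterm]
      rw [← Finset.sum_div, hq.sum_one V ∅ (Finset.disjoint_empty_right _) x x]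
    rw [key V B hVB w x, hsum, one_div, inv_inv, div_mul_cancel₀]
    exact ne_of_gt hBpos
  rw [main J hVJ w, main I hVI y]
end

section
/- Let q be a positive f-specification and define P_V(x) = q_V^y(x)/q_I^x(y) · (Σ_{α} q_V^y(α)/q_I^α(y))^{-1} for some (equivalently any) y ∈ X^I with I disjoint from V. Then the family {P_V} is consistent in Kolmogorov's sense: for disjoint finite V, Λ and any x ∈ X^V, Σ_{v ∈ X^Λ} P_{V∪Λ}(xv) = P_V(x). -/
section Aux

variable {S X : Type*} [DecidableEq S] [Fintype X]

lemma setOn_of_not_mem (x : S → X) (A : Finset S) (σ : {u // u ∈ A} → X) {u : S}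
    (h : u ∉ A) : setOn x A σ u = x u := dif_neg h

/-- The key algebraic identity: the ratio defining `P_{V∪Λ}` factors as the ratio
defining `P_V` times the conditional probability `q Λ V w w`. -/
lemma fspec_key {q : Finset S → Finset S → (S → X) → (S → X) → ℝ} (hq : IsFSpec q)
    (V Λ I : Finset S) (hVΛ : Disjoint V Λ) (hVI : Disjoint V I) (hΛI : Disjoint Λ I)
    (y w : S → X) :
    q (V ∪ Λ) I y w / q I (V ∪ Λ) w y = q V I y w / q I V w y * q Λ V w w := by
  have h1 := hq.consistent V Λ I hVΛ hVI hΛI y w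
  have h2 := hq.consistent Λ I V hΛI hVΛ.symm hVI.symm w (patch w I y)
  have h3 := hq.consistent I Λ V hΛI.symm hVI.symm hVΛ.symm w (patch w I y)
  -- identifications of configurations via locality
  have e1 : patch w Λ (patch w I y) = w := by
    funext u
    by_cases hΛ : u ∈ Λ
    · simp [patch, hΛ, Finset.disjoint_left.mp hΛI hΛ]
    · simp [patch, hΛ]
  have e4 : patch w I (patch w I y) = patch w I y := by
    funext u
    by_cases hI : u ∈ I <;> simp [patch, hI]
  rw [e1] at h2
  rw [e4] at h3
  have e2 : q I (V ∪ Λ) w (patch w I y) = q I (V ∪ Λ) w y :=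
    hq.isLocal _ _ _ _ _ _ (fun u _ => rfl) (fun u hu => by simp [patch, hu])
  have e3 : q I V w (patch w I y) = q I V w y :=
    hq.isLocal _ _ _ _ _ _ (fun u _ => rfl) (fun u hu => by simp [patch, hu])
  rw [e2] at h2
  rw [e3] at h3
  have e6 : q Λ V w (patch w I y) = q Λ V w w :=
    hq.isLocal _ _ _ _ _ _ (fun u _ => rfl)
      (fun u hu => by simp [patch, Finset.disjoint_left.mp hΛI hu])
  rw [e6] at h2
  -- the two Λ-factors coincide
  have e5 : q Λ (I ∪ V) (patch y V w) w = q Λ (V ∪ I) (patch w I y) (patch w I y) := by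
    rw [Finset.union_comm I V]
    refine hq.isLocal _ _ _ _ _ _ (fun u hu => ?_) (fun u hu => ?_)
    · rcases Finset.mem_union.mp hu with hV | hI
      · simp [patch, hV, Finset.disjoint_left.mp hVI hV]
      · simp [patch, hI, Finset.disjoint_right.mp hVI hI]
    · simp [patch, Finset.disjoint_left.mp hΛI hu]
  rw [e5] at h1
  rw [Finset.union_comm Λ I] at h2
  -- combine h2 and h3
  have E : q Λ V w w * q I (V ∪ Λ) w y
      = q I V w y * q Λ (V ∪ I) (patch w I y) (patch w I y) := by
    rw [← h2, ← h3]
  have pIV : 0 < q I V w y := hq.pos I V hVI.symm w y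
  have pΛV : 0 < q Λ V w w := hq.pos Λ V hVΛ.symm w w
  have pIVΛ : 0 < q I (V ∪ Λ) w y := by
    refine hq.pos I (V ∪ Λ) ?_ w y
    simp [Finset.disjoint_union_right, hVI.symm, hΛI.symm]
  rw [h1]
  field_simp
  linear_combination -(q V I y w) * E

/-- Splitting a configuration over a disjoint union. -/
def unionEquiv (V Λ : Finset S) (h : Disjoint V Λ) :
    (({u // u ∈ V} → X) × ({u // u ∈ Λ} → X)) ≃ ({u // u ∈ V ∪ Λ} → X) where
  toFun p u := if h' : u.1 ∈ V then p.1 ⟨u.1, h'⟩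
    else p.2 ⟨u.1, (Finset.mem_union.mp u.2).resolve_left h'⟩
  invFun β := (fun u => β ⟨u.1, Finset.mem_union_left _ u.2⟩,
               fun u => β ⟨u.1, Finset.mem_union_right _ u.2⟩)
  left_inv p := by
    obtain ⟨p1, p2⟩ := p
    simp only [Prod.mk.injEq]
    constructor <;> funext u
    · exact dif_pos u.2
    · exact dif_neg (Finset.disjoint_right.mp h u.2)
  right_inv β := by
    funext u
    by_cases h' : u.1 ∈ V
    · simpa [h'] using congrArg β (Subtype.ext rfl)
    · simpa [h'] using congrArg β (Subtype.ext rfl)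

lemma setOn_unionEquiv (V Λ : Finset S) (h : Disjoint V Λ) (x : S → X)
    (α : {u // u ∈ V} → X) (v : {u // u ∈ Λ} → X) :
    setOn x (V ∪ Λ) (unionEquiv V Λ h (α, v)) = setOn (setOn x V α) Λ v := by
  funext u
  by_cases hΛ : u ∈ Λ
  · have hu : u ∈ V ∪ Λ := Finset.mem_union_right _ hΛ
    have hV : u ∉ V := Finset.disjoint_right.mp h hΛ
    simp [setOn, unionEquiv, hu, hΛ, hV]
  · by_cases hV : u ∈ V
    · simp [setOn, unionEquiv, Finset.mem_union_left _ hV, hΛ, hV]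
    · simp [setOn, unionEquiv, hΛ, hV, Finset.mem_union]

end Aux

/-- the family `{P_V}` defined from a positive `f`-specification by
formula (Q->P), `P_V(x) = q_V^y(x)/q_I^x(y) · (Σ_α q_V^y(α)/q_I^α(y))⁻¹` (with the
auxiliary set `I` disjoint from `V ∪ Λ`), is consistent in Kolmogorov's sense:
`Σ_{v ∈ X^Λ} P_{V∪Λ}(xv) = P_V(x)`. -/
theorem candidate_marginal_kolmogorov_consistent {S X : Type*} [DecidableEq S]
    [Fintype X] [Nonempty X]
    (q : Finset S → Finset S → (S → X) → (S → X) → ℝ) (hq : IsFSpec q)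
    (V Λ I : Finset S) (hVΛ : Disjoint V Λ) (hVI : Disjoint V I) (hΛI : Disjoint Λ I)
    (y x : S → X) :
    (∑ v : {u // u ∈ Λ} → X,
      q (V ∪ Λ) I y (setOn x Λ v) / q I (V ∪ Λ) (setOn x Λ v) y *
        (∑ β : {u // u ∈ V ∪ Λ} → X,
          q (V ∪ Λ) I y (setOn x (V ∪ Λ) β) / q I (V ∪ Λ) (setOn x (V ∪ Λ) β) y)⁻¹)
    = q V I y x / q I V x y *
        (∑ α : {u // u ∈ V} → X, q V I y (setOn x V α) / q I V (setOn x V α) y)⁻¹ := by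
  have hΛV : Disjoint Λ V := hVΛ.symm
  -- each summand on the left
  have hterm : ∀ v : {u // u ∈ Λ} → X,
      q (V ∪ Λ) I y (setOn x Λ v) / q I (V ∪ Λ) (setOn x Λ v) y
        = q V I y x / q I V x y * q Λ V x (setOn x Λ v) := by
    intro v
    rw [fspec_key hq V Λ I hVΛ hVI hΛI y (setOn x Λ v)]
    have l1 : q V I y (setOn x Λ v) = q V I y x :=
      hq.isLocal _ _ _ _ _ _ (fun u _ => rfl)
        (fun u hu => setOn_of_not_mem x Λ v (Finset.disjoint_left.mp hVΛ hu))
    have l2 : q I V (setOn x Λ v) y = q I V x y :=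
      hq.isLocal _ _ _ _ _ _
        (fun u hu => setOn_of_not_mem x Λ v (Finset.disjoint_left.mp hVΛ hu)) (fun u _ => rfl)
    have l3 : q Λ V (setOn x Λ v) (setOn x Λ v) = q Λ V x (setOn x Λ v) :=
      hq.isLocal _ _ _ _ _ _
        (fun u hu => setOn_of_not_mem x Λ v (Finset.disjoint_left.mp hVΛ hu)) (fun u _ => rfl)
    rw [l1, l2, l3]
  -- the normalizing sums agree
  have hZ : (∑ β : {u // u ∈ V ∪ Λ} → X,
        q (V ∪ Λ) I y (setOn x (V ∪ Λ) β) / q I (V ∪ Λ) (setOn x (V ∪ Λ) β) y)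
      = ∑ α : {u // u ∈ V} → X, q V I y (setOn x V α) / q I V (setOn x V α) y := by
    rw [← Equiv.sum_comp (unionEquiv V Λ hVΛ)
      (fun β => q (V ∪ Λ) I y (setOn x (V ∪ Λ) β) / q I (V ∪ Λ) (setOn x (V ∪ Λ) β) y)]
    rw [Fintype.sum_prod_type]
    refine Finset.sum_congr rfl fun α _ => ?_
    have : ∀ v : {u // u ∈ Λ} → X,
        q (V ∪ Λ) I y (setOn x (V ∪ Λ) (unionEquiv V Λ hVΛ (α, v))) /
          q I (V ∪ Λ) (setOn x (V ∪ Λ) (unionEquiv V Λ hVΛ (α, v))) y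
        = q V I y (setOn x V α) / q I V (setOn x V α) y *
            q Λ V (setOn x V α) (setOn (setOn x V α) Λ v) := by
      intro v
      rw [setOn_unionEquiv V Λ hVΛ x α v,
        fspec_key hq V Λ I hVΛ hVI hΛI y (setOn (setOn x V α) Λ v)]
      have l1 : q V I y (setOn (setOn x V α) Λ v) = q V I y (setOn x V α) :=
        hq.isLocal _ _ _ _ _ _ (fun u _ => rfl)
          (fun u hu => setOn_of_not_mem _ Λ v (Finset.disjoint_left.mp hVΛ hu))
      have l2 : q I V (setOn (setOn x V α) Λ v) y = q I V (setOn x V α) y :=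
        hq.isLocal _ _ _ _ _ _
          (fun u hu => setOn_of_not_mem _ Λ v (Finset.disjoint_left.mp hVΛ hu)) (fun u _ => rfl)
      have l3 : q Λ V (setOn (setOn x V α) Λ v) (setOn (setOn x V α) Λ v)
          = q Λ V (setOn x V α) (setOn (setOn x V α) Λ v) :=
        hq.isLocal _ _ _ _ _ _
          (fun u hu => setOn_of_not_mem _ Λ v (Finset.disjoint_left.mp hVΛ hu)) (fun u _ => rfl)
      rw [l1, l2, l3]
    simp_rw [this]
    rw [← Finset.mul_sum, hq.sum_one Λ V hΛV (setOn x V α) (setOn x V α), mul_one]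
  calc (∑ v : {u // u ∈ Λ} → X,
      q (V ∪ Λ) I y (setOn x Λ v) / q I (V ∪ Λ) (setOn x Λ v) y *
        (∑ β : {u // u ∈ V ∪ Λ} → X,
          q (V ∪ Λ) I y (setOn x (V ∪ Λ) β) / q I (V ∪ Λ) (setOn x (V ∪ Λ) β) y)⁻¹)
      = (∑ v : {u // u ∈ Λ} → X, q Λ V x (setOn x Λ v)) *
          (q V I y x / q I V x y *
            (∑ α : {u // u ∈ V} → X, q V I y (setOn x V α) / q I V (setOn x V α) y)⁻¹) := by
        rw [Finset.sum_mul]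
        refine Finset.sum_congr rfl fun v _ => ?_
        rw [hterm v, hZ]
        ring
    _ = q V I y x / q I V x y *
          (∑ α : {u // u ∈ V} → X, q V I y (setOn x V α) / q I V (setOn x V α) y)⁻¹ := by
        rw [hq.sum_one Λ V hΛV x x, one_mul]
end

section
/- Let q be a positive f-specification, V a finite set, and I a finite set disjoint from V. Then for any x ∈ X^V, the quantity P_V(x) = q_V^y(x)/q_I^x(y)·(Σ_α q_V^y(α)/q_I^α(y))^{-1} equals (Σ_{β∈X^I} q_I^x(β)/q_V^β(x))^{-1}; i.e., formulas (Q->P) and (Q->P-2) agree. -/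
/-
Splitting `q_{A ∪ B}^∅` in the two possible orders by consistency gives, for disjoint `A`, `B`,
`q_A^B(w) / q_B^A(w) = q_A^∅(w) / q_B^∅(w)`. Hence in `Σ_α q_V^y(α) / q_I^α(y)` the denominator
`q_I^∅(y)` no longer depends on `α`, and the sum is `1 / q_I^∅(y)` because `q_V^∅` is a
probability distribution. So the left-hand side is `q_V^∅(x)`, and by the same argument with the
roles of `V` and `I` exchanged so is the right-hand side.
-/

theorem patch_apply_of_mem {S X : Type*} [DecidableEq S] (z : S → X) {A : Finset S}
    (x : S → X) {u : S} (hu : u ∈ A) : patch z A x u = x u := if_pos hu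

theorem patch_apply_of_notMem {S X : Type*} [DecidableEq S] (z : S → X) {A : Finset S}
    (x : S → X) {u : S} (hu : u ∉ A) : patch z A x u = z u := if_neg hu

@[simp]
theorem patch_self {S X : Type*} [DecidableEq S] (w : S → X) (A : Finset S) :
    patch w A w = w := by
  funext u
  simp [patch]

namespace IsFSpec

variable {S X : Type*} [DecidableEq S] [Fintype X]
  {q : Finset S → Finset S → (S → X) → (S → X) → ℝ}

theorem empty_boundary_congr (hq : IsFSpec q) (A : Finset S) (z z' : S → X) {x x' : S → X}
    (hx : ∀ u ∈ A, x u = x' u) : q A ∅ z x = q A ∅ z' x' :=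
  hq.isLocal A ∅ z z' x x' (by simp) hx

theorem mul_comm_of_disjoint (hq : IsFSpec q) {A B C : Finset S} (hAB : Disjoint A B)
    (hAC : Disjoint A C) (hBC : Disjoint B C) (w : S → X) :
    q A C w w * q B (C ∪ A) w w = q B C w w * q A (C ∪ B) w w := by
  have hAB' := hq.consistent A B C hAB hAC hBC w w
  have hBA := hq.consistent B A C hAB.symm hBC hAC w w
  rw [patch_self] at hAB' hBA
  rw [← hAB', ← hBA, Finset.union_comm]

theorem div_eq_div_empty_boundary (hq : IsFSpec q) {A B : Finset S} (hAB : Disjoint A B)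
    (z x : S → X) : q A B z x / q B A x z = q A ∅ z x / q B ∅ z z := by
  set w := patch z A x
  have hwA : ∀ u ∈ A, w u = x u := fun u hu => patch_apply_of_mem z x hu
  have hwB : ∀ u ∈ B, w u = z u := fun u hu =>
    patch_apply_of_notMem z x (Finset.disjoint_right.mp hAB hu)
  rw [← hq.isLocal A B w z w x hwB hwA, ← hq.isLocal B A w x w z hwA hwB,
    ← hq.empty_boundary_congr A w z hwA, ← hq.empty_boundary_congr B w z hwB,
    div_eq_div_iff (hq.pos B A hAB.symm w w).ne' (hq.pos B ∅ (Finset.disjoint_empty_right B) w w).ne']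
  have h := hq.mul_comm_of_disjoint hAB (Finset.disjoint_empty_right A)
    (Finset.disjoint_empty_right B) w
  rw [Finset.empty_union, Finset.empty_union] at h
  linear_combination -h

theorem sum_div_eq_inv (hq : IsFSpec q) {A B : Finset S} (hAB : Disjoint A B) (z x : S → X) :
    ∑ α : {u // u ∈ A} → X, q A B z (setOn x A α) / q B A (setOn x A α) z = (q B ∅ z z)⁻¹ := by
  simp_rw [hq.div_eq_div_empty_boundary hAB, div_eq_mul_inv, ← Finset.sum_mul,
    hq.sum_one A ∅ (Finset.disjoint_empty_right A) z x, one_mul]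

end IsFSpec

theorem candidate_marginal_formulas_agree_general {S X : Type*} [DecidableEq S]
    [Fintype X]
    (q : Finset S → Finset S → (S → X) → (S → X) → ℝ) (hq : IsFSpec q)
    (V I : Finset S) (hVI : Disjoint V I) (y x : S → X) :
    q V I y x / q I V x y *
        (∑ α : {u // u ∈ V} → X, q V I y (setOn x V α) / q I V (setOn x V α) y)⁻¹
      = (∑ β : {u // u ∈ I} → X, q I V x (setOn y I β) / q V I (setOn y I β) x)⁻¹ := by
  rw [hq.div_eq_div_empty_boundary hVI, hq.sum_div_eq_inv hVI, hq.sum_div_eq_inv hVI.symm,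
    inv_inv, inv_inv, div_mul_cancel₀ _ (hq.pos I ∅ (Finset.disjoint_empty_right I) y y).ne']
  exact hq.empty_boundary_congr V y x fun _ _ => rfl

/-- formulas (Q->P) and (Q->P-2) agree: for a positive `f`-specification,
`q_V^y(x)/q_I^x(y) · (Σ_α q_V^y(α)/q_I^α(y))⁻¹ = (Σ_{β∈X^I} q_I^x(β)/q_V^β(x))⁻¹`. -/
theorem candidate_marginal_formulas_agree {S X : Type*} [DecidableEq S]
    [Fintype X] [Nonempty X]
    (q : Finset S → Finset S → (S → X) → (S → X) → ℝ) (hq : IsFSpec q)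
    (V I : Finset S) (hVI : Disjoint V I) (y x : S → X) :
    q V I y x / q I V x y *
        (∑ α : {u // u ∈ V} → X, q V I y (setOn x V α) / q I V (setOn x V α) y)⁻¹
      = (∑ β : {u // u ∈ I} → X, q I V x (setOn y I β) / q V I (setOn y I β) x)⁻¹ :=
  candidate_marginal_formulas_agree_general q hq V I hVI y x
end

section
/- Let q be a positive f-specification, V a finite set, z a finite boundary configuration outside V, and I a finite set disjoint from V ∪ supp(z), y ∈ X^I. Then for all x ∈ X^V: q_V^z(x) = q_V^{zy}(x)/q_I^{zx}(y) · (Σ_{α ∈ X^V} q_V^{zy}(α)/q_I^{zα}(y))^{-1}. -/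
/-- relation (qz-qzy): for a positive `f`-specification, a finite set `V`,
a finite boundary condition `z` on `Z` outside `V`, and `y ∈ X^I` with `I` disjoint
from `V ∪ Z`,
`q_V^z(x) = q_V^{zy}(x)/q_I^{zx}(y) · (Σ_{α∈X^V} q_V^{zy}(α)/q_I^{zα}(y))⁻¹`. -/
theorem fspec_boundary_extension {S X : Type*} [DecidableEq S]
    [Fintype X] [Nonempty X]
    (q : Finset S → Finset S → (S → X) → (S → X) → ℝ) (hq : IsFSpec q)
    (V Z I : Finset S) (hVZ : Disjoint V Z) (hVI : Disjoint V I) (hZI : Disjoint Z I)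
    (z y x : S → X) :
    q V Z z x
      = q V (Z ∪ I) (patch z I y) x / q I (Z ∪ V) (patch z V x) y *
        (∑ α : {u // u ∈ V} → X,
          q V (Z ∪ I) (patch z I y) (setOn x V α) /
            q I (Z ∪ V) (patch z V (setOn x V α)) y)⁻¹ := by
  have hIV : Disjoint I V := hVI.symm
  have hIZ : Disjoint I Z := hZI.symm
  have hIZV : Disjoint I (Z ∪ V) := Finset.disjoint_union_right.mpr ⟨hIZ, hIV⟩
  have key : ∀ x' : S → X,
      q V Z z x' * q I (Z ∪ V) (patch z V x') y
        = q I Z z y * q V (Z ∪ I) (patch z I y) x' := by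
    intro x'
    set w : S → X := patch (patch z I y) V x' with hw
    have hwV : ∀ u ∈ V, w u = x' u := by
      intro u hu; simp [hw, patch, hu]
    have hwI : ∀ u ∈ I, w u = y u := by
      intro u hu
      have huV : u ∉ V := fun h => (Finset.disjoint_left.mp hVI h) hu
      simp [hw, patch, hu, huV]
    have h1 := hq.consistent V I Z hVI hVZ hIZ z w
    have h2 := hq.consistent I V Z hIV hIZ hVZ z w
    have e1 : q V Z z w = q V Z z x' :=
      hq.isLocal V Z z z w x' (fun u _ => rfl) hwV
    have e2 : q I (Z ∪ V) (patch z V w) w = q I (Z ∪ V) (patch z V x') y := by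
      refine hq.isLocal I (Z ∪ V) _ _ _ _ ?_ hwI
      intro u hu
      by_cases h : u ∈ V
      · simp [patch, h, hwV u h]
      · simp [patch, h]
    have e3 : q I Z z w = q I Z z y :=
      hq.isLocal I Z z z w y (fun u _ => rfl) hwI
    have e4 : q V (Z ∪ I) (patch z I w) w = q V (Z ∪ I) (patch z I y) x' := by
      refine hq.isLocal V (Z ∪ I) _ _ _ _ ?_ hwV
      intro u hu
      by_cases h : u ∈ I
      · simp [patch, h, hwI u h]
      · simp [patch, h]
    have hcomm : q (V ∪ I) Z z w = q (I ∪ V) Z z w := by rw [Finset.union_comm]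
    rw [h1, h2, e1, e2, e3, e4] at hcomm
    exact hcomm
  have hposI : ∀ x', (0:ℝ) < q I (Z ∪ V) (patch z V x') y :=
    fun x' => hq.pos I (Z ∪ V) hIZV _ _
  have key' : ∀ x', q V Z z x'
      = q I Z z y * (q V (Z ∪ I) (patch z I y) x' / q I (Z ∪ V) (patch z V x') y) := by
    intro x'
    rw [← mul_div_assoc, eq_div_iff (hposI x').ne']
    exact key x'
  have hsum := hq.sum_one V Z hVZ z x
  have hS : ∑ α : {u // u ∈ V} → X,
      q V (Z ∪ I) (patch z I y) (setOn x V α) /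
        q I (Z ∪ V) (patch z V (setOn x V α)) y = (q I Z z y)⁻¹ := by
    have hIZpos := hq.pos I Z hIZ z y
    have : q I Z z y * ∑ α : {u // u ∈ V} → X,
        q V (Z ∪ I) (patch z I y) (setOn x V α) /
          q I (Z ∪ V) (patch z V (setOn x V α)) y = 1 := by
      rw [Finset.mul_sum]
      rw [← hsum]
      exact Finset.sum_congr rfl fun α _ => (key' (setOn x V α)).symm
    field_simp at this ⊢
    linarith [this]
  rw [hS, inv_inv, key' x]
  ring
end

section
/- Let {q_t^z} be a positive 1f-specification: a family of positive probability distributions on X at each site t with finite boundary conditions z, satisfying q_t^z(x)·q_s^{zx}(y) = q_s^z(y)·q_t^{zy}(x) for all distinct sites t,s, x ∈ X, y ∈ X, and finite boundary z outside {t,s}. Then for all distinct t, s, all x,u ∈ X at t, y,v ∈ X at s, and finite nonempty boundary z outside {t,s}: q_t^{zy}(x)·q_s^{zx}(v)·q_t^{zv}(u)·q_s^{zu}(y) = q_t^{zy}(u)·q_s^{zu}(v)·q_t^{zv}(x)·q_s^{zx}(y). -/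
/-- A positive `1f`-specification: to each site `t` and each finite boundary set `B`
(not containing `t`) with boundary configuration `z` (encoded as a full function
`S → X`, with `q t B z x` depending on `z` only through its values on `B`) it assigns
a positive probability distribution `q t B z ·` on `X`, and the two-point consistency
conditions `q_t^z(x) q_s^{zx}(y) = q_s^z(y) q_t^{zy}(x)` hold. -/
structure IsOnePointSpec {S X : Type*} [DecidableEq S] [Fintype X]
    (q : S → Finset S → (S → X) → X → ℝ) : Prop where
  isLocal : ∀ (t : S) (B : Finset S) (z z' : S → X) (x : X),
    (∀ u ∈ B, z u = z' u) → q t B z x = q t B z' x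
  pos : ∀ (t : S) (B : Finset S), t ∉ B → ∀ z x, 0 < q t B z x
  sum_one : ∀ (t : S) (B : Finset S), t ∉ B → ∀ z, ∑ x : X, q t B z x = 1
  consistent : ∀ (t s : S), t ≠ s → ∀ B : Finset S, t ∉ B → s ∉ B →
    ∀ (z : S → X) (x y : X),
      q t B z x * q s (B ∪ {t}) (Function.update z t x) y
        = q s B z y * q t (B ∪ {s}) (Function.update z s y) x

/-- the four-cycle identity (Q1f-4x4) with nonempty finite boundary
condition `z` on `B` outside `{t,s}`:
`q_t^{zy}(x) q_s^{zx}(v) q_t^{zv}(u) q_s^{zu}(y) = q_t^{zy}(u) q_s^{zu}(v) q_t^{zv}(x) q_s^{zx}(y)`. -/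
theorem one_point_four_cycle {S X : Type*} [DecidableEq S] [Fintype X] [Nonempty X]
    (q : S → Finset S → (S → X) → X → ℝ) (hq : IsOnePointSpec q)
    (t s : S) (hts : t ≠ s) (B : Finset S) (hB : B.Nonempty)
    (htB : t ∉ B) (hsB : s ∉ B) (z : S → X) (x u y v : X) :
    q t (B ∪ {s}) (Function.update z s y) x * q s (B ∪ {t}) (Function.update z t x) v *
      q t (B ∪ {s}) (Function.update z s v) u * q s (B ∪ {t}) (Function.update z t u) y
    = q t (B ∪ {s}) (Function.update z s y) u * q s (B ∪ {t}) (Function.update z t u) v *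
      q t (B ∪ {s}) (Function.update z s v) x * q s (B ∪ {t}) (Function.update z t x) y := by
  have h1 := hq.consistent t s hts B htB hsB z x y
  have h2 := hq.consistent t s hts B htB hsB z u v
  have h3 := hq.consistent t s hts B htB hsB z u y
  have h4 := hq.consistent t s hts B htB hsB z x v
  have hy : q s B z y ≠ 0 := (hq.pos s B hsB z y).ne'
  have hv : q s B z v ≠ 0 := (hq.pos s B hsB z v).ne'
  apply mul_left_cancel₀ (mul_ne_zero hy hv)
  linear_combination
    - (q s B z v * q s (B ∪ {t}) (Function.update z t x) v *
      q t (B ∪ {s}) (Function.update z s v) u * q s (B ∪ {t}) (Function.update z t u) y) * h1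
    - (q t B z x * q s (B ∪ {t}) (Function.update z t x) y *
      q s (B ∪ {t}) (Function.update z t x) v * q s (B ∪ {t}) (Function.update z t u) y) * h2
    + (q s (B ∪ {t}) (Function.update z t u) v * q s (B ∪ {t}) (Function.update z t x) y *
      q s B z v * q t (B ∪ {s}) (Function.update z s v) x) * h3
    + (q s (B ∪ {t}) (Function.update z t u) v * q s (B ∪ {t}) (Function.update z t x) y *
      q t B z u * q s (B ∪ {t}) (Function.update z t u) y) * h4
end

section
/- Let {q_t^z} be a positive 1f-specification (satisfying q_t^z(x)q_s^{zx}(y) = q_s^z(y)q_t^{zy}(x) for distinct sites t,s and finite boundary conditions z). Then the four-cycle identity holds also with empty boundary condition: for distinct sites t, s and x,u ∈ X, y,v ∈ X, q_t^y(x)·q_s^x(v)·q_t^v(u)·q_s^u(y) = q_t^y(u)·q_s^u(v)·q_t^v(x)·q_s^x(y). -/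
/-- the four-cycle identity holds also with empty boundary condition
(the set of sites being infinite, so a third auxiliary site exists):
`q_t^y(x) q_s^x(v) q_t^v(u) q_s^u(y) = q_t^y(u) q_s^u(v) q_t^v(x) q_s^x(y)`. -/
theorem one_point_four_cycle_empty {S X : Type*} [DecidableEq S] [Infinite S]
    [Fintype X] [Nonempty X]
    (q : S → Finset S → (S → X) → X → ℝ) (hq : IsOnePointSpec q)
    (t s : S) (hts : t ≠ s) (z : S → X) (x u y v : X) :
    q t {s} (Function.update z s y) x * q s {t} (Function.update z t x) v *
      q t {s} (Function.update z s v) u * q s {t} (Function.update z t u) y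
    = q t {s} (Function.update z s y) u * q s {t} (Function.update z t u) v *
      q t {s} (Function.update z s v) x * q s {t} (Function.update z t x) y := by
  have hC := hq.consistent t s hts ∅ (Finset.notMem_empty t) (Finset.notMem_empty s) z
  have hE : (∅ : Finset S) ∪ {t} = {t} := by simp
  have hE' : (∅ : Finset S) ∪ {s} = {s} := by simp
  rw [hE, hE'] at hC
  have hpos : ∀ b, 0 < q s ∅ z b := fun b => hq.pos s ∅ (Finset.notMem_empty s) z b
  have g : ∀ a b, q t {s} (Function.update z s b) a
      = q t ∅ z a * q s {t} (Function.update z t a) b / q s ∅ z b := by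
    intro a b
    rw [eq_div_iff (hpos b).ne']
    linarith [hC a b]
  rw [g x y, g u v, g u y, g x v]
  field_simp
end

section
/- Let {q_t^z} be a positive 1f-specification. Then for any three distinct sites t, s, r and any x, y, w ∈ X: q_t^w(x)·q_s^x(y)·q_r^y(w) = q_s^w(y)·q_t^y(x)·q_r^x(w). -/
/-- the three-cycle identity (Q1f-3x3) for a positive `1f`-specification:
for three distinct sites `t`, `s`, `r` and spins `x, y, w ∈ X`,
`q_t^w(x) q_s^x(y) q_r^y(w) = q_s^w(y) q_t^y(x) q_r^x(w)`. -/
theorem one_point_three_cycle {S X : Type*} [DecidableEq S] [Fintype X] [Nonempty X]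
    (q : S → Finset S → (S → X) → X → ℝ) (hq : IsOnePointSpec q)
    (t s r : S) (hts : t ≠ s) (htr : t ≠ r) (hsr : s ≠ r)
    (z : S → X) (x y w : X) :
    q t {r} (Function.update z r w) x * q s {t} (Function.update z t x) y *
      q r {s} (Function.update z s y) w
    = q s {r} (Function.update z r w) y * q t {s} (Function.update z s y) x *
      q r {t} (Function.update z t x) w := by

  have h1 := hq.consistent t s hts {r} (by simp [htr]) (by simp [hsr]) (Function.update z r w) x y
  have h2 := hq.consistent s r hsr {t} (by simp [Ne.symm hts]) (by simp [Ne.symm htr]) (Function.update z t x) y w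
  have h3 := hq.consistent t r htr {s} (by simp [hts]) (by simp [Ne.symm hsr]) (Function.update z s y) x w
  have e1 : q s ({t} ∪ {r}) (Function.update (Function.update z t x) r w) y
      = q s ({r} ∪ {t}) (Function.update (Function.update z r w) t x) y := by
    rw [Finset.union_comm, Function.update_comm htr]
  have e2 : q r ({s} ∪ {t}) (Function.update (Function.update z s y) t x) w
      = q r ({t} ∪ {s}) (Function.update (Function.update z t x) s y) w := by
    rw [Finset.union_comm, Function.update_comm (Ne.symm hts)]
  have e3 : q t ({s} ∪ {r}) (Function.update (Function.update z s y) r w) x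
      = q t ({r} ∪ {s}) (Function.update (Function.update z r w) s y) x := by
    rw [Finset.union_comm, Function.update_comm hsr]
  rw [e1] at h2
  rw [e2, e3] at h3
  set c1 := q s ({r} ∪ {t}) (Function.update (Function.update z r w) t x) y with hc1def
  set c2 := q t ({r} ∪ {s}) (Function.update (Function.update z r w) s y) x with hc2def
  set c3 := q r ({t} ∪ {s}) (Function.update (Function.update z t x) s y) w with hc3def
  have hc1 : 0 < c1 := hq.pos s _ (by simp [Ne.symm hts, hsr]) _ _
  have hc3 : 0 < c3 := hq.pos r _ (by simp [Ne.symm htr, Ne.symm hsr]) _ _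
  have hcc : c1 * c3 ≠ 0 := by positivity
  apply mul_right_cancel₀ hcc
  linear_combination (q s {t} (Function.update z t x) y * q r {s} (Function.update z s y) w * c3) * h1
    + (q s {r} (Function.update z r w) y * q r {s} (Function.update z s y) w * c2) * h2
    - (q s {r} (Function.update z r w) y * q r {t} (Function.update z t x) w * c1) * h3
end

section
/- Let {q_t^z} be a positive 1f-specification and define, for a site t, a site s ≠ t and y ∈ X, P_t(u) = q_t^y(u)/q_s^u(y) · (Σ_{α∈X} q_t^y(α)/q_s^α(y))^{-1}. Then P_t(u) = (Σ_{β∈X} q_s^u(β)/q_t^β(u))^{-1} for all u ∈ X. -/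
/-- formula (Q1->P1-2): for a positive `1f`-specification and sites
`t ≠ s`, the one-point marginal
`P_t(u) = q_t^y(u)/q_s^u(y) · (Σ_α q_t^y(α)/q_s^α(y))⁻¹`
equals `(Σ_β q_s^u(β)/q_t^β(u))⁻¹`. -/
theorem one_point_marginal_formulas_agree {S X : Type*} [DecidableEq S] [Infinite S]
    [Fintype X] [Nonempty X]
    (q : S → Finset S → (S → X) → X → ℝ) (hq : IsOnePointSpec q)
    (t s : S) (hts : t ≠ s) (z : S → X) (u y : X) :
    q t {s} (Function.update z s y) u / q s {t} (Function.update z t u) y *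
        (∑ α : X, q t {s} (Function.update z s y) α / q s {t} (Function.update z t α) y)⁻¹
      = (∑ β : X, q s {t} (Function.update z t u) β / q t {s} (Function.update z s β) u)⁻¹ := by
  have hkey : ∀ x w : X,
      q t {s} (Function.update z s w) x / q s {t} (Function.update z t x) w
        = q t ∅ z x / q s ∅ z w := by
    intro x w
    have h := hq.consistent t s hts ∅ (Finset.notMem_empty t) (Finset.notMem_empty s) z x w
    simp only [Finset.empty_union] at h
    have h1 := hq.pos s {t} (by simp [Ne.symm hts]) (Function.update z t x) w
    have h2 := hq.pos s ∅ (Finset.notMem_empty s) z w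
    field_simp
    linarith [h]
  have hpt : 0 < q t ∅ z u := hq.pos t ∅ (Finset.notMem_empty t) z u
  have hsum : ∑ α : X, q t ∅ z α = 1 := hq.sum_one t ∅ (Finset.notMem_empty t) z
  have hsums : ∑ β : X, q s ∅ z β = 1 := hq.sum_one s ∅ (Finset.notMem_empty s) z
  have hLHS : (∑ α : X, q t {s} (Function.update z s y) α / q s {t} (Function.update z t α) y)
      = (q s ∅ z y)⁻¹ := by
    have hsy : 0 < q s ∅ z y := hq.pos s ∅ (Finset.notMem_empty s) z y
    calc ∑ α : X, q t {s} (Function.update z s y) α / q s {t} (Function.update z t α) y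
        = ∑ α : X, q t ∅ z α / q s ∅ z y := by
          refine Finset.sum_congr rfl fun α _ => ?_
          exact hkey α y
      _ = (∑ α : X, q t ∅ z α) / q s ∅ z y := by rw [Finset.sum_div]
      _ = (q s ∅ z y)⁻¹ := by rw [hsum, one_div]
  have hRHS : (∑ β : X, q s {t} (Function.update z t u) β / q t {s} (Function.update z s β) u)
      = (q t ∅ z u)⁻¹ := by
    calc ∑ β : X, q s {t} (Function.update z t u) β / q t {s} (Function.update z s β) u
        = ∑ β : X, q s ∅ z β / q t ∅ z u := by
          refine Finset.sum_congr rfl fun β _ => ?_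
          have h := hkey u β
          have h1 := hq.pos s {t} (by simp [Ne.symm hts]) (Function.update z t u) β
          have h2 := hq.pos s ∅ (Finset.notMem_empty s) z β
          have h3 := hq.pos t {s} (by simp [hts]) (Function.update z s β) u
          field_simp at h ⊢
          linarith [h]
      _ = (∑ β : X, q s ∅ z β) / q t ∅ z u := by rw [Finset.sum_div]
      _ = (q t ∅ z u)⁻¹ := by rw [hsums, one_div]
  rw [hkey u y, hLHS, hRHS]
  have hsy : 0 < q s ∅ z y := hq.pos s ∅ (Finset.notMem_empty s) z y
  field_simp
end

section
/- Let {q_t^z} be a positive 1f-specification and define one-point marginals P_t by P_t(u) = (Σ_{β∈X} q_s^u(β)/q_t^β(u))^{-1} for some site s ≠ t. Then for any two distinct sites t₁, t₂ and x₁, x₂ ∈ X: P_{t₁}(x₁)·q_{t₂}^{x₁}(x₂) = P_{t₂}(x₂)·q_{t₁}^{x₂}(x₁). Consequently the two-point distribution defined by P_{t₁,t₂}(x₁x₂) = P_{t₁}(x₁)q_{t₂}^{x₁}(x₂) is symmetric in the enumeration of the two points. -/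

private lemma sum_eq_inv {S X : Type*} [DecidableEq S] [Fintype X] [Nonempty X]
    (q : S → Finset S → (S → X) → X → ℝ) (hq : IsOnePointSpec q)
    (t₁ t₂ : S) (h12 : t₁ ≠ t₂) (z : S → X) (x₁ : X) :
    (∑ β : X, q t₂ {t₁} (Function.update z t₁ x₁) β /
        q t₁ {t₂} (Function.update z t₂ β) x₁) = (q t₁ ∅ z x₁)⁻¹ := by
  have h1 : (t₁ : S) ∉ ({t₂} : Finset S) := by simp [h12]
  have h2 : (t₂ : S) ∉ ({t₁} : Finset S) := by simp [Ne.symm h12]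
  have hpos1 : 0 < q t₁ ∅ z x₁ := hq.pos t₁ ∅ (by simp) z x₁
  have hterm : ∀ β : X, q t₂ {t₁} (Function.update z t₁ x₁) β /
      q t₁ {t₂} (Function.update z t₂ β) x₁ = q t₂ ∅ z β / q t₁ ∅ z x₁ := by
    intro β
    have hc := hq.consistent t₁ t₂ h12 ∅ (by simp) (by simp) z x₁ β
    simp only [Finset.empty_union] at hc
    have hp : 0 < q t₁ {t₂} (Function.update z t₂ β) x₁ :=
      hq.pos t₁ {t₂} h1 _ x₁
    rw [div_eq_div_iff hp.ne' hpos1.ne']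
    linarith [hc]
  rw [Finset.sum_congr rfl (fun β _ => hterm β)]
  rw [← Finset.sum_div, hq.sum_one t₂ ∅ (by simp) z, one_div]

/-- enumeration independence of the two-point distribution constructed
from a positive `1f`-specification: with the one-point marginals
`P_{t₁}(x₁) = (Σ_β q_{t₂}^{x₁}(β)/q_{t₁}^β(x₁))⁻¹` (auxiliary site `s = t₂`) and the
dual `P_{t₂}(x₂)`, one has `P_{t₁}(x₁)·q_{t₂}^{x₁}(x₂) = P_{t₂}(x₂)·q_{t₁}^{x₂}(x₁)`,
so `P_{t₁t₂}(x₁x₂) = P_{t₁}(x₁) q_{t₂}^{x₁}(x₂)` is symmetric in the enumeration. -/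
theorem two_point_enumeration_symmetric {S X : Type*} [DecidableEq S]
    [Fintype X] [Nonempty X]
    (q : S → Finset S → (S → X) → X → ℝ) (hq : IsOnePointSpec q)
    (t₁ t₂ : S) (h12 : t₁ ≠ t₂) (z : S → X) (x₁ x₂ : X) :
    (∑ β : X, q t₂ {t₁} (Function.update z t₁ x₁) β /
        q t₁ {t₂} (Function.update z t₂ β) x₁)⁻¹ *
      q t₂ {t₁} (Function.update z t₁ x₁) x₂
    = (∑ β : X, q t₁ {t₂} (Function.update z t₂ x₂) β /
        q t₂ {t₁} (Function.update z t₁ β) x₂)⁻¹ *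
      q t₁ {t₂} (Function.update z t₂ x₂) x₁ := by
  rw [sum_eq_inv q hq t₁ t₂ h12 z x₁, sum_eq_inv q hq t₂ t₁ (Ne.symm h12) z x₂,
    inv_inv, inv_inv]
  have hc := hq.consistent t₁ t₂ h12 ∅ (by simp) (by simp) z x₁ x₂
  simp only [Finset.empty_union] at hc
  linarith [hc]
end

section
/- Let {q_t^z} be a 1f-specification (one-point distributions with finite boundary conditions satisfying q_t^z(x)q_s^{zx}(y) = q_s^z(y)q_t^{zy}(x)). For a finite set V with enumeration V = {t₁,…,t_n} and boundary condition z outside V, define q_V^z(x) = q_{t₁}^z(x₁)·q_{t₂}^{z x₁}(x₂)·…·q_{t_n}^{z x₁…x_{n-1}}(x_n). Then q_V^z does not depend on the enumeration of V, is a probability distribution on X^V, and the family {q_V^z} satisfies the f-specification consistency q_{V∪I}^z(xy) = q_V^z(x)·q_I^{zx}(y) for disjoint V, I. -/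
/-- The product `q_{t₁}^z(x₁)·q_{t₂}^{zx₁}(x₂)·…·q_{t_n}^{zx₁…x_{n-1}}(x_n)` of
formula (Q1->Q-1), along the enumeration given by the list `L`, with boundary set `B`
and boundary configuration `z`. -/
def qProd {S X : Type*} [DecidableEq S] (q : S → Finset S → (S → X) → X → ℝ) :
    List S → Finset S → (S → X) → (S → X) → ℝ
  | [], _, _, _ => 1
  | t :: L, B, z, x => q t B z (x t) * qProd q L (B ∪ {t}) (Function.update z t (x t)) x

/-
Reordering an enumeration is a composition of adjacent transpositions, and swapping two
adjacent sites in the product replaces the pair of factors `q_t^z(x) q_s^{zx}(y)` by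
`q_s^z(y) q_t^{zy}(x)`, which is the two-point consistency. For normalisation, fix the value
at the first site: the remaining product is a product of the same kind with an enlarged
boundary, so by induction it sums to `1`, and what is left is the sum of `q_{t₁}^z`.
-/

section OnePointSpec
variable {S X : Type*} [DecidableEq S]

lemma disjoint_union_singleton_of_nodup_cons {t : S} {L : List S} {B : Finset S}
    (hnd : (t :: L).Nodup) (hB : Disjoint (t :: L).toFinset B) :
    Disjoint L.toFinset (B ∪ {t}) := by
  rw [List.toFinset_cons, Finset.disjoint_insert_left] at hB
  rw [Finset.disjoint_union_right, Finset.disjoint_singleton_right, List.mem_toFinset]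
  exact ⟨hB.2, (List.nodup_cons.1 hnd).1⟩

lemma setOn_insert {t : S} {A : Finset S} (ht : t ∉ A) (x : S → X)
    (σ : {u // u ∈ insert t A} → X) :
    setOn x (insert t A) σ
      = setOn (Function.update x t (σ ⟨t, Finset.mem_insert_self t A⟩)) A
          (fun u => σ ⟨u, Finset.mem_insert_of_mem u.2⟩) := by
  funext u
  by_cases huA : u ∈ A
  · simp [setOn, huA]
  · by_cases hut : u = t
    · subst hut; simp [setOn, huA]
    · simp [setOn, huA, hut]

lemma sum_setOn_insert [Fintype X] {M : Type*} [AddCommMonoid M] {t : S} {A : Finset S}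
    (ht : t ∉ A) (x : S → X) (f : (S → X) → M) :
    ∑ σ : {u // u ∈ insert t A} → X, f (setOn x (insert t A) σ)
      = ∑ a : X, ∑ τ : {u // u ∈ A} → X, f (setOn (Function.update x t a) A τ) := by
  let e : ({u // u ∈ insert t A} → X) ≃ X × ({u // u ∈ A} → X) :=
    ((Finset.subtypeInsertEquivOption ht).arrowCongr (Equiv.refl X)).trans
      Equiv.piOptionEquivProd
  rw [← Fintype.sum_prod_type']
  exact Fintype.sum_equiv e _ _ fun σ => by
    rw [setOn_insert ht]
    simp [e, Finset.subtypeInsertEquivOption]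

variable {q : S → Finset S → (S → X) → X → ℝ}

lemma qProd_append (L M : List S) (B : Finset S) (z x : S → X) :
    qProd q (L ++ M) B z x
      = qProd q L B z x * qProd q M (B ∪ L.toFinset) (patch z L.toFinset x) x := by
  induction L generalizing B z with
  | nil =>
    have hpatch : patch z ∅ x = z := by funext u; simp [patch]
    simp [qProd, hpatch]
  | cons t L ih =>
    have hB : B ∪ {t} ∪ L.toFinset = B ∪ (t :: L).toFinset := by
      rw [List.toFinset_cons, Finset.insert_eq, Finset.union_assoc]
    have hpatch : patch (Function.update z t (x t)) L.toFinset x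
        = patch z (t :: L).toFinset x := by
      funext u
      by_cases hut : u = t
      · subst hut; simp [patch]
      · simp [patch, hut]
    simp only [List.cons_append, qProd, ih, hB, hpatch, mul_assoc]

variable [Fintype X]

lemma qProd_swap (hq : IsOnePointSpec q) {t s : S} (hts : t ≠ s) {B : Finset S}
    (ht : t ∉ B) (hs : s ∉ B) (L : List S) (z x : S → X) :
    qProd q (t :: s :: L) B z x = qProd q (s :: t :: L) B z x := by
  simp only [qProd, ← mul_assoc]
  rw [hq.consistent t s hts B ht hs z (x t) (x s), Function.update_comm hts,
    Finset.union_right_comm]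

lemma qProd_perm (hq : IsOnePointSpec q) {L L' : List S} (h : L.Perm L') (hL : L.Nodup)
    {B : Finset S} (hB : Disjoint L.toFinset B) (z x : S → X) :
    qProd q L B z x = qProd q L' B z x := by
  induction h generalizing B z with
  | nil => rfl
  | cons t _ ih =>
    exact congrArg _ (ih (List.nodup_cons.1 hL).2
      (disjoint_union_singleton_of_nodup_cons hL hB) _)
  | swap s t L =>
    have hts : t ≠ s := fun h => by simp [h] at hL
    simp only [List.toFinset_cons, Finset.disjoint_insert_left] at hB
    exact qProd_swap hq hts hB.1 hB.2.1 L z x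
  | trans h₁ _ ih₁ ih₂ =>
    rw [ih₁ hL hB, ih₂ (h₁.nodup hL) (by rwa [← List.toFinset_eq_of_perm _ _ h₁])]

lemma sum_qProd_setOn (hq : IsOnePointSpec q) {L : List S} (hL : L.Nodup) {B : Finset S}
    (hB : Disjoint L.toFinset B) (z x : S → X) :
    ∑ σ : {u // u ∈ L.toFinset} → X, qProd q L B z (setOn x L.toFinset σ) = 1 := by
  induction L generalizing B z x with
  | nil =>
    simp only [qProd, Finset.sum_const, nsmul_one, Nat.cast_eq_one, Finset.card_univ,
      Fintype.card_eq_one_iff]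
    exact ⟨fun u => absurd u.2 (by simp), fun f => funext fun u => absurd u.2 (by simp)⟩
  | cons t L ih =>
    have htL : t ∉ L.toFinset := by simpa using (List.nodup_cons.1 hL).1
    have htB : t ∉ B := Finset.disjoint_left.1 hB (by simp)
    have hfirst : ∀ (a : X) (τ : {u // u ∈ L.toFinset} → X),
        setOn (Function.update x t a) L.toFinset τ t = a := fun a τ => by
      simp [setOn, htL]
    rw [List.toFinset_cons, sum_setOn_insert htL, ← hq.sum_one t B htB z]
    refine Finset.sum_congr rfl fun a _ => ?_
    simp only [qProd, hfirst, ← Finset.mul_sum,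
      ih (List.nodup_cons.1 hL).2 (disjoint_union_singleton_of_nodup_cons hL hB), mul_one]

end OnePointSpec

theorem one_point_extends_to_fspec_general {S X : Type*} [DecidableEq S] [Fintype X]
    (q : S → Finset S → (S → X) → X → ℝ) (hq : IsOnePointSpec q) :
    (∀ L L' : List S, L.Nodup → L'.Nodup → L.toFinset = L'.toFinset →
      ∀ B : Finset S, Disjoint L.toFinset B → ∀ z x : S → X,
        qProd q L B z x = qProd q L' B z x)
    ∧ (∀ L : List S, L.Nodup → ∀ B : Finset S, Disjoint L.toFinset B →
        ∀ z x : S → X,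
          ∑ σ : {u // u ∈ L.toFinset} → X, qProd q L B z (setOn x L.toFinset σ) = 1)
    ∧ (∀ L M : List S, (L ++ M).Nodup → ∀ B : Finset S,
        Disjoint (L ++ M).toFinset B → ∀ z x : S → X,
          qProd q (L ++ M) B z x
            = qProd q L B z x * qProd q M (B ∪ L.toFinset) (patch z L.toFinset x) x) := by
  refine ⟨fun L L' hL hL' hset B hB z x => ?_,
    fun L hL B hB z x => sum_qProd_setOn hq hL hB z x,
    fun L M _ B _ z x => qProd_append L M B z x⟩
  exact qProd_perm hq (List.perm_of_nodup_nodup_toFinset_eq hL hL' hset) hL hB z x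

/-- Theorem Th-Q1f->Qf: for a `1f`-specification, the family
`q_V^z(x) = q_{t₁}^z(x₁)·…·q_{t_n}^{zx₁…x_{n-1}}(x_n)` (1) does not depend on the
enumeration of `V`, (2) is a probability distribution on `X^V`, and (3) satisfies the
`f`-specification consistency `q_{V∪I}^z(xy) = q_V^z(x)·q_I^{zx}(y)` for disjoint `V`, `I`. -/
theorem one_point_extends_to_fspec {S X : Type*} [DecidableEq S] [Fintype X] [Nonempty X]
    (q : S → Finset S → (S → X) → X → ℝ) (hq : IsOnePointSpec q) :
    (∀ L L' : List S, L.Nodup → L'.Nodup → L.toFinset = L'.toFinset →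
      ∀ B : Finset S, Disjoint L.toFinset B → ∀ z x : S → X,
        qProd q L B z x = qProd q L' B z x)
    ∧ (∀ L : List S, L.Nodup → ∀ B : Finset S, Disjoint L.toFinset B →
        ∀ z x : S → X,
          ∑ σ : {u // u ∈ L.toFinset} → X, qProd q L B z (setOn x L.toFinset σ) = 1)
    ∧ (∀ L M : List S, (L ++ M).Nodup → ∀ B : Finset S,
        Disjoint (L ++ M).toFinset B → ∀ z x : S → X,
          qProd q (L ++ M) B z x
            = qProd q L B z x * qProd q M (B ∪ L.toFinset) (patch z L.toFinset x) x) :=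
  one_point_extends_to_fspec_general q hq
end

section
/- Let q^Π be a positive Palm specification: distributions q_A^z on X^A parameterized by boundary conditions z at a single point, satisfying (i) q_t^y(x)·q_{{s}∪V}^x(yu) = q_s^x(y)·q_{{t}∪V}^y(xu) for distinct sites t,s, finite V disjoint from {t,s}, and (ii) Kolmogorov consistency Σ_{y∈X^I} q_{V∪I}^z(xy) = q_V^z(x). Then the one-point elements satisfy the four-cycle identity: for distinct t, s and x,u,y,v ∈ X, q_t^y(x)·q_s^x(v)·q_t^v(u)·q_s^u(y) = q_t^y(u)·q_s^u(v)·q_t^v(x)·q_s^x(y). -/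
/-- A positive Palm specification: to each finite set `A` and boundary condition `c ∈ X`
at a single site `t ∉ A` it assigns a positive probability distribution `q A t c ·` on
`X^A` (configurations encoded as full functions, `q A t c x` depending on `x` only on
`A`), satisfying (i) `q_t^y(x)·q_{{s}∪V}^x(yu) = q_s^x(y)·q_{{t}∪V}^y(xu)` and
(ii) the Kolmogorov consistency `Σ_{y∈X^I} q_{V∪I}^c(xy) = q_V^c(x)`. -/
structure IsPalmSpec {S X : Type*} [DecidableEq S] [Fintype X]
    (q : Finset S → S → X → (S → X) → ℝ) : Prop where
  isLocal : ∀ (A : Finset S) (t : S) (c : X) (x x' : S → X),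
    (∀ u ∈ A, x u = x' u) → q A t c x = q A t c x'
  pos : ∀ (A : Finset S) (t : S), t ∉ A → ∀ c x, 0 < q A t c x
  sum_one : ∀ (A : Finset S) (t : S), t ∉ A → ∀ (c : X) (x : S → X),
    ∑ σ : {u // u ∈ A} → X, q A t c (setOn x A σ) = 1
  consistent1 : ∀ (t s : S), t ≠ s → ∀ V : Finset S, t ∉ V → s ∉ V →
    ∀ (x y : X) (u : S → X),
      q {t} s y (Function.update u t x) * q ({s} ∪ V) t x (Function.update u s y)
        = q {s} t x (Function.update u s y) * q ({t} ∪ V) s y (Function.update u t x)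
  kolmogorov : ∀ (V I : Finset S), Disjoint V I → ∀ t : S, t ∉ V → t ∉ I →
    ∀ (c : X) (x : S → X),
      ∑ σ : {u // u ∈ I} → X, q (V ∪ I) t c (setOn x I σ) = q V t c x

/-- the one-point elements of a positive Palm specification satisfy the
four-cycle identity: for distinct sites `t`, `s` and spins `x, u, y, v ∈ X`,
`q_t^y(x) q_s^x(v) q_t^v(u) q_s^u(y) = q_t^y(u) q_s^u(v) q_t^v(x) q_s^x(y)`. -/
theorem palm_four_cycle {S X : Type*} [DecidableEq S] [Infinite S] [Fintype X] [Nonempty X]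
    (q : Finset S → S → X → (S → X) → ℝ) (hq : IsPalmSpec q)
    (t s : S) (hts : t ≠ s) (w : S → X) (x u y v : X) :
    q {t} s y (Function.update w t x) * q {s} t x (Function.update w s v) *
      q {t} s v (Function.update w t u) * q {s} t u (Function.update w s y)
    = q {t} s y (Function.update w t u) * q {s} t u (Function.update w s v) *
      q {t} s v (Function.update w t x) * q {s} t x (Function.update w s y) := by
  classical
  obtain ⟨r, hr⟩ := Infinite.exists_notMem_finset ({t, s} : Finset S)
  simp only [Finset.mem_insert, Finset.mem_singleton, not_or] at hr
  obtain ⟨hrt, hrs⟩ := hr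
  -- key factorized relation
  have key : ∀ P Q : X,
      q {t} s Q (Function.update w t P) * q {r} t P w * q {s} r (w r) (Function.update w s Q)
      = q {s} t P (Function.update w s Q) * q {r} s Q w
        * q {t} r (w r) (Function.update w t P) := by
    intro P Q
    have hI1 := hq.consistent1 t s hts {r}
      (by simp only [Finset.mem_singleton]; exact fun h => hrt h.symm)
      (by simp only [Finset.mem_singleton]; exact fun h => hrs h.symm) P Q w
    have hII := hq.consistent1 r s hrs {t}
      (by simp only [Finset.mem_singleton]; exact hrt)
      (by simp only [Finset.mem_singleton]; exact fun h => hts h.symm)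
      (w r) Q (Function.update w t P)
    have hIII := hq.consistent1 r t hrt {s}
      (by simp only [Finset.mem_singleton]; exact hrs)
      (by simp only [Finset.mem_singleton]; exact hts)
      (w r) P (Function.update w s Q)
    have e1 : q {r} s Q (Function.update (Function.update w t P) r (w r)) = q {r} s Q w := by
      apply hq.isLocal
      intro a ha
      simp only [Finset.mem_singleton] at ha
      subst ha
      simp
    have e2 : q {s} r (w r) (Function.update (Function.update w t P) s Q)
        = q {s} r (w r) (Function.update w s Q) := by
      apply hq.isLocal
      intro a ha
      simp only [Finset.mem_singleton] at ha
      subst ha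
      simp
    have e3 : q ({r} ∪ {t}) s Q (Function.update (Function.update w t P) r (w r))
        = q ({t} ∪ {r}) s Q (Function.update w t P) := by
      rw [Finset.union_comm]
      apply hq.isLocal
      intro a ha
      simp only [Finset.mem_union, Finset.mem_singleton] at ha
      rcases ha with h | h <;> subst h <;>
        simp [Function.update_apply, hrt, Ne.symm hrt]
    have e4 : q ({t} ∪ {s}) r (w r) (Function.update (Function.update w s Q) t P)
        = q ({s} ∪ {t}) r (w r) (Function.update (Function.update w t P) s Q) := by
      rw [Finset.union_comm]
      apply hq.isLocal
      intro a ha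
      simp only [Finset.mem_union, Finset.mem_singleton] at ha
      rcases ha with h | h <;> subst h <;>
        simp [Function.update_apply, hts, Ne.symm hts]
    have e5 : q {r} t P (Function.update (Function.update w s Q) r (w r)) = q {r} t P w := by
      apply hq.isLocal
      intro a ha
      simp only [Finset.mem_singleton] at ha
      subst ha
      simp
    have e6 : q {t} r (w r) (Function.update (Function.update w s Q) t P)
        = q {t} r (w r) (Function.update w t P) := by
      apply hq.isLocal
      intro a ha
      simp only [Finset.mem_singleton] at ha
      subst ha
      simp
    have e7 : q ({r} ∪ {s}) t P (Function.update (Function.update w s Q) r (w r))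
        = q ({s} ∪ {r}) t P (Function.update w s Q) := by
      rw [Finset.union_comm]
      apply hq.isLocal
      intro a ha
      simp only [Finset.mem_union, Finset.mem_singleton] at ha
      rcases ha with h | h <;> subst h <;>
        simp [Function.update_apply, hrs, Ne.symm hrs]
    rw [e1, e2, e3] at hII
    rw [e4, e5, e6, e7] at hIII
    have hH : 0 < q ({s} ∪ {t}) r (w r) (Function.update (Function.update w t P) s Q) :=
      hq.pos _ r (by simp [Finset.mem_union, hrs, hrt]) _ _
    apply mul_right_cancel₀ hH.ne'
    linear_combination
      (q {t} s Q (Function.update w t P) * q {s} r (w r) (Function.update w s Q)) * hIII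
      + (q {s} r (w r) (Function.update w s Q) * q {t} r (w r) (Function.update w t P)) * hI1
      - (q {s} t P (Function.update w s Q) * q {t} r (w r) (Function.update w t P)) * hII
  have h1 := key x y
  have h2 := key u v
  have h3 := key u y
  have h4 := key x v
  have hBx : 0 < q {r} t x w := hq.pos _ t (by simpa using fun h => hrt h.symm) _ _
  have hBu : 0 < q {r} t u w := hq.pos _ t (by simpa using fun h => hrt h.symm) _ _
  have hCy : 0 < q {s} r (w r) (Function.update w s y) :=
    hq.pos _ r (by simpa using hrs) _ _
  have hCv : 0 < q {s} r (w r) (Function.update w s v) :=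
    hq.pos _ r (by simpa using hrs) _ _
  apply mul_right_cancel₀
    (show q {r} t x w * q {s} r (w r) (Function.update w s y)
        * (q {r} t u w * q {s} r (w r) (Function.update w s v)) ≠ 0 from
      (mul_pos (mul_pos hBx hCy) (mul_pos hBu hCv)).ne')
  linear_combination
    (q {t} s v (Function.update w t u) * q {r} t u w * q {s} r (w r) (Function.update w s v)
      * (q {s} t x (Function.update w s v) * q {s} t u (Function.update w s y))) * h1
    + (q {s} t x (Function.update w s y) * q {r} s y w * q {t} r (w r) (Function.update w t x)
      * q {s} t x (Function.update w s v) * q {s} t u (Function.update w s y)) * h2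
    - (q {t} s v (Function.update w t x) * q {r} t x w * q {s} r (w r) (Function.update w s v)
      * q {s} t u (Function.update w s v) * q {s} t x (Function.update w s y)) * h3
    - (q {s} t u (Function.update w s y) * q {r} s y w * q {t} r (w r) (Function.update w t u)
      * q {s} t u (Function.update w s v) * q {s} t x (Function.update w s y)) * h4
end

section
/- Let q^Π be a positive Palm specification. Fix a finite set Λ with at least one point and define, for finite V disjoint from Λ, z ∈ X^Λ, and t ∈ Λ: q_V^z(x) = q_{V∪(Λ∖{t})}^{z_t}(x·z_{Λ∖{t}}) / q_{Λ∖{t}}^{z_t}(z_{Λ∖{t}}). Then this value is independent of the choice of t ∈ Λ, and the resulting family {q_V^z} satisfies the f-specification consistency q_{V∪I}^z(xy) = q_V^z(x)·q_I^{zx}(y). -/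
/-- Theorem Th-QPi->Qf: from a positive Palm specification, for a fixed
finite nonempty `Λ`, boundary configuration `z ∈ X^Λ` and `t ∈ Λ`, the quantity
`q_V^z(x) = q_{V∪(Λ∖{t})}^{z_t}(x·z_{Λ∖{t}}) / q_{Λ∖{t}}^{z_t}(z_{Λ∖{t}})`
(1) is independent of the choice of `t ∈ Λ`, and (2) the resulting family satisfies
the `f`-specification consistency `q_{V∪I}^z(xy) = q_V^z(x)·q_I^{zx}(y)`
(here `x : S → X` simultaneously encodes the configurations on `V`, `I` and `V ∪ I`,
and `zx = patch z V x`). -/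
theorem palm_determines_fspec {S X : Type*} [DecidableEq S] [Fintype X] [Nonempty X]
    (q : Finset S → S → X → (S → X) → ℝ) (hq : IsPalmSpec q)
    (Λ V I : Finset S) (hVI : Disjoint V I) (hVΛ : Disjoint V Λ) (hIΛ : Disjoint I Λ)
    (z x : S → X) :
    (∀ t ∈ Λ, ∀ s ∈ Λ,
      q (V ∪ (Λ \ {t})) t (z t) (patch z V x) / q (Λ \ {t}) t (z t) z
        = q (V ∪ (Λ \ {s})) s (z s) (patch z V x) / q (Λ \ {s}) s (z s) z)
    ∧ (∀ t ∈ Λ,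
      q ((V ∪ I) ∪ (Λ \ {t})) t (z t) (patch z (V ∪ I) x) / q (Λ \ {t}) t (z t) z
        = (q (V ∪ (Λ \ {t})) t (z t) (patch z V x) / q (Λ \ {t}) t (z t) z) *
          (q (I ∪ ((Λ ∪ V) \ {t})) t ((patch z V x) t)
              (patch (patch z V x) I x) /
            q ((Λ ∪ V) \ {t}) t ((patch z V x) t) (patch z V x))) := by
  obtain ⟨hloc, hpos, _, hcons, _⟩ := hq
  constructor
  · intro t ht s hs
    rcases eq_or_ne t s with rfl | hts
    · rfl
    have htV : t ∉ V := fun h => Finset.disjoint_left.mp hVΛ h ht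
    have hsV : s ∉ V := fun h => Finset.disjoint_left.mp hVΛ h hs
    have hxt : patch z V x t = z t := by simp [patch, htV]
    have hxs : patch z V x s = z s := by simp [patch, hsV]
    have hupt : Function.update (patch z V x) t (z t) = patch z V x := by
      rw [← hxt]; exact Function.update_eq_self _ _
    have hups : Function.update (patch z V x) s (z s) = patch z V x := by
      rw [← hxs]; exact Function.update_eq_self _ _
    have h1 := hcons t s hts (V ∪ (Λ \ {t, s})) (by simp [htV]) (by simp [hsV])
      (z t) (z s) (patch z V x)
    have h2 := hcons t s hts (Λ \ {t, s}) (by simp) (by simp) (z t) (z s) z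
    rw [hupt, hups] at h1
    rw [Function.update_eq_self, Function.update_eq_self] at h2
    have e1 : {s} ∪ (V ∪ Λ \ {t, s}) = V ∪ Λ \ {t} := by
      ext u
      simp only [Finset.mem_union, Finset.mem_singleton, Finset.mem_sdiff,
        Finset.mem_insert]
      constructor
      · rintro (rfl | h | ⟨h1, h2⟩)
        · exact Or.inr ⟨hs, fun h => hts h.symm⟩
        · exact Or.inl h
        · exact Or.inr ⟨h1, fun h => h2 (Or.inl h)⟩
      · rintro (h | ⟨h1, h2⟩)
        · exact Or.inr (Or.inl h)
        · by_cases hus : u = s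
          · exact Or.inl hus
          · exact Or.inr (Or.inr ⟨h1, by tauto⟩)
    have e2 : {t} ∪ (V ∪ Λ \ {t, s}) = V ∪ Λ \ {s} := by
      ext u
      simp only [Finset.mem_union, Finset.mem_singleton, Finset.mem_sdiff,
        Finset.mem_insert]
      constructor
      · rintro (rfl | h | ⟨h1, h2⟩)
        · exact Or.inr ⟨ht, hts⟩
        · exact Or.inl h
        · exact Or.inr ⟨h1, fun h => h2 (Or.inr h)⟩
      · rintro (h | ⟨h1, h2⟩)
        · exact Or.inr (Or.inl h)
        · by_cases hut : u = t
          · exact Or.inl hut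
          · exact Or.inr (Or.inr ⟨h1, by tauto⟩)
    have e3 : {s} ∪ Λ \ {t, s} = Λ \ {t} := by
      have := e1; rw [Finset.union_comm V (Λ \ {t, s})] at this
      ext u
      simp only [Finset.mem_union, Finset.mem_singleton, Finset.mem_sdiff,
        Finset.mem_insert]
      constructor
      · rintro (rfl | ⟨h1, h2⟩)
        · exact ⟨hs, fun h => hts h.symm⟩
        · exact ⟨h1, fun h => h2 (Or.inl h)⟩
      · rintro ⟨h1, h2⟩
        by_cases hus : u = s
        · exact Or.inl hus
        · exact Or.inr ⟨h1, by tauto⟩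
    have e4 : {t} ∪ Λ \ {t, s} = Λ \ {s} := by
      ext u
      simp only [Finset.mem_union, Finset.mem_singleton, Finset.mem_sdiff,
        Finset.mem_insert]
      constructor
      · rintro (rfl | ⟨h1, h2⟩)
        · exact ⟨ht, hts⟩
        · exact ⟨h1, fun h => h2 (Or.inr h)⟩
      · rintro ⟨h1, h2⟩
        by_cases hut : u = t
        · exact Or.inl hut
        · exact Or.inr ⟨h1, by tauto⟩
    rw [e1, e2] at h1
    rw [e3, e4] at h2
    have lt : q {t} s (z s) (patch z V x) = q {t} s (z s) z := by
      refine hloc _ _ _ _ _ ?_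
      intro u hu
      rw [Finset.mem_singleton] at hu
      subst hu; exact hxt
    have ls : q {s} t (z t) (patch z V x) = q {s} t (z t) z := by
      refine hloc _ _ _ _ _ ?_
      intro u hu
      rw [Finset.mem_singleton] at hu
      subst hu; exact hxs
    rw [lt, ls] at h1
    have pa : 0 < q {t} s (z s) z := hpos _ _ (by simp [Ne.symm hts]) _ _
    have pb : 0 < q {s} t (z t) z := hpos _ _ (by simp [hts]) _ _
    have pt : 0 < q (Λ \ {t}) t (z t) z := hpos _ _ (by simp) _ _
    have ps : 0 < q (Λ \ {s}) s (z s) z := hpos _ _ (by simp) _ _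
    field_simp
    apply mul_left_cancel₀ (ne_of_gt pa)
    linear_combination (q (Λ \ {s}) s (z s) z) * h1 -
      (q (V ∪ Λ \ {s}) s (z s) (patch z V x)) * h2
  · intro t ht
    have htV : t ∉ V := fun h => Finset.disjoint_left.mp hVΛ h ht
    have htI : t ∉ I := fun h => Finset.disjoint_left.mp hIΛ h ht
    have hxt : patch z V x t = z t := by simp [patch, htV]
    have hpatch : patch (patch z V x) I x = patch z (V ∪ I) x := by
      funext u
      by_cases h1 : u ∈ I <;> by_cases h2 : u ∈ V <;>
        simp [patch, h1, h2]
    have hset1 : (V ∪ I) ∪ Λ \ {t} = I ∪ (Λ ∪ V) \ {t} := by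
      ext u
      simp only [Finset.mem_union, Finset.mem_sdiff, Finset.mem_singleton]
      constructor
      · rintro ((h | h) | ⟨h1, h2⟩)
        · exact Or.inr ⟨Or.inr h, fun he => htV (he ▸ h)⟩
        · exact Or.inl h
        · exact Or.inr ⟨Or.inl h1, h2⟩
      · rintro (h | ⟨(h | h), h2⟩)
        · exact Or.inl (Or.inr h)
        · exact Or.inr ⟨h, h2⟩
        · exact Or.inl (Or.inl h)
    have hset2 : V ∪ Λ \ {t} = (Λ ∪ V) \ {t} := by
      ext u
      simp only [Finset.mem_union, Finset.mem_sdiff, Finset.mem_singleton]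
      constructor
      · rintro (h | ⟨h1, h2⟩)
        · exact ⟨Or.inr h, fun he => htV (he ▸ h)⟩
        · exact ⟨Or.inl h1, h2⟩
      · rintro ⟨(h | h), h2⟩
        · exact Or.inr ⟨h, h2⟩
        · exact Or.inl h
    rw [hpatch, hxt, hset1, hset2]
    have pM : 0 < q ((Λ ∪ V) \ {t}) t (z t) (patch z V x) := hpos _ _ (by simp) _ _
    have pD : 0 < q (Λ \ {t}) t (z t) z := hpos _ _ (by simp) _ _
    field_simp
end

section
/- Let q^D = {q_V^z} be a D-specification: probability distributions on X^V parameterized by boundary conditions z on the full complement of V, satisfying q_{V∪I}^z(xy) = q_I^{zx}(y)·Σ_{β∈X^I} q_{V∪I}^z(xβ) for disjoint finite V, I. Then for all disjoint finite V, I, configurations x,u ∈ X^V, y ∈ X^I, and boundary condition z: q_{V∪I}^z(xy)·q_V^{zy}(u) = q_{V∪I}^z(uy)·q_V^{zy}(x). -/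
/-- A `D`-specification: to each finite `V` and boundary condition `z` on the full
complement of `V` (encoded as a full function, `q V z x` depending on `z` only outside
`V` and on `x` only on `V`) it assigns a probability distribution `q V z ·` on `X^V`,
satisfying Dobrushin's consistency conditions
`q_{V∪I}^z(xy) = q_I^{zx}(y) · Σ_{β∈X^I} q_{V∪I}^z(xβ)` for disjoint `V`, `I`
(here `x : S → X` simultaneously encodes the configurations on `V` and on `V ∪ I`). -/
structure IsDSpec {S X : Type*} [DecidableEq S] [Fintype X]
    (q : Finset S → (S → X) → (S → X) → ℝ) : Prop where
  isLocal : ∀ (V : Finset S) (z z' x x' : S → X),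
    (∀ u ∉ V, z u = z' u) → (∀ u ∈ V, x u = x' u) → q V z x = q V z' x'
  nonneg : ∀ V z x, 0 ≤ q V z x
  sum_one : ∀ (V : Finset S) (z x : S → X),
    ∑ σ : {u // u ∈ V} → X, q V z (setOn x V σ) = 1
  consistent : ∀ (V I : Finset S), Disjoint V I → ∀ z x : S → X,
    q (V ∪ I) z x
      = q I (patch z V x) x * ∑ σ : {u // u ∈ I} → X, q (V ∪ I) z (setOn x I σ)

/-- equivalent form of Dobrushin's consistency conditions: for disjoint
finite `V`, `I`, configurations `x, u ∈ X^V`, `y ∈ X^I` and boundary condition `z`,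
`q_{V∪I}^z(xy)·q_V^{zy}(u) = q_{V∪I}^z(uy)·q_V^{zy}(x)`
(the configuration `xy` is `patch y V x`, the boundary condition `zy` is `patch z I y`). -/
theorem dspec_consistency_equivalent_form {S X : Type*} [DecidableEq S]
    [Fintype X] [Nonempty X]
    (q : Finset S → (S → X) → (S → X) → ℝ) (hq : IsDSpec q)
    (V I : Finset S) (hVI : Disjoint V I) (z x u y : S → X) :
    q (V ∪ I) z (patch y V x) * q V (patch z I y) u
      = q (V ∪ I) z (patch y V u) * q V (patch z I y) x := by
  have key : ∀ w : S → X, q (V ∪ I) z (patch y V w)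
      = q V (patch z I y) w
        * ∑ σ : {t // t ∈ V} → X, q (I ∪ V) z (setOn (patch y V w) V σ) := by
    intro w
    rw [Finset.union_comm, hq.consistent I V hVI.symm z (patch y V w)]
    congr 1
    apply hq.isLocal
    · intro t ht
      by_cases h : t ∈ I <;> simp [patch, h, ht]
    · intro t ht
      simp [patch, ht]
  have hsum : ∀ σ : {t // t ∈ V} → X,
      setOn (patch y V x) V σ = setOn (patch y V u) V σ := by
    intro σ; funext t
    by_cases h : t ∈ V <;> simp [setOn, patch, h]
  rw [key x, key u]
  simp_rw [hsum]
  ring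
end

section
/- Let q^D be a positive D-specification (satisfying q_{V∪I}^z(xy) = q_I^{zx}(y)·Σ_β q_{V∪I}^z(xβ)). Then for all disjoint finite V, I, boundary condition z on the complement of V∪I, and y ∈ X^I: Σ_{β∈X^I} q_{V∪I}^z(xβ) = q_V^{zy}(x)/q_I^{zx}(y) · (Σ_{α∈X^V} q_V^{zy}(α)/q_I^{zα}(y))^{-1}, for every x ∈ X^V. -/
/-- Auxiliary equivalence splitting configurations on a disjoint union. -/
def prodPiEquiv {S X : Type*} [DecidableEq S] (V I : Finset S) (hVI : Disjoint V I) :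
    ({u // u ∈ V} → X) × ({u // u ∈ I} → X) ≃ ({u // u ∈ V ∪ I} → X) where
  toFun p u := if h : u.1 ∈ V then p.1 ⟨u.1, h⟩ else
    p.2 ⟨u.1, (Finset.mem_union.mp u.2).resolve_left h⟩
  invFun τ :=
    (fun u => τ ⟨u.1, Finset.mem_union_left _ u.2⟩,
     fun u => τ ⟨u.1, Finset.mem_union_right _ u.2⟩)
  left_inv := by
    rintro ⟨p1, p2⟩
    refine Prod.ext ?_ ?_
    · funext u; simp [u.2]
    · funext u
      have hv : u.1 ∉ V := fun h => (Finset.disjoint_left.mp hVI h) u.2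
      simp [hv]
  right_inv := by
    intro τ; funext u
    by_cases hv : u.1 ∈ V <;> simp [hv]

/-- the `D`-analogue of relation (qz-qzy): for a positive
`D`-specification, disjoint finite `V`, `I`, boundary condition `z` and `y ∈ X^I`,
`Σ_{β∈X^I} q_{V∪I}^z(xβ) = q_V^{zy}(x)/q_I^{zx}(y) · (Σ_{α∈X^V} q_V^{zy}(α)/q_I^{zα}(y))⁻¹`
for every `x ∈ X^V`. -/
theorem dspec_partial_sum_formula {S X : Type*} [DecidableEq S]
    [Fintype X] [Nonempty X]
    (q : Finset S → (S → X) → (S → X) → ℝ) (hq : IsDSpec q)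
    (hpos : ∀ V z x, 0 < q V z x)
    (V I : Finset S) (hVI : Disjoint V I) (z x y : S → X) :
    ∑ σ : {u // u ∈ I} → X, q (V ∪ I) z (setOn x I σ)
      = q V (patch z I y) x / q I (patch z V x) y *
        (∑ α : {u // u ∈ V} → X,
          q V (patch z I y) (setOn x V α) / q I (patch z V (setOn x V α)) y)⁻¹ := by
  classical
  set U : ℝ := ∑ β : {u // u ∈ V} → X, q (V ∪ I) z (setOn (patch x I y) V β) with hU
  have hUpos : 0 < U := Finset.sum_pos (fun β _ => hpos _ _ _) Finset.univ_nonempty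
  -- key identity
  have key : ∀ a : S → X,
      q I (patch z V a) y * (∑ σ : {u // u ∈ I} → X, q (V ∪ I) z (setOn a I σ))
        = q V (patch z I y) a * U := by
    intro a
    set w : S → X := patch a I y with hw
    have h1 := hq.consistent V I hVI z w
    have h2 := hq.consistent I V hVI.symm z w
    rw [Finset.union_comm I V] at h2
    -- conversions
    have e1 : q I (patch z V w) w = q I (patch z V a) y := by
      apply hq.isLocal
      · intro u hu
        simp only [patch, hw]
        by_cases hv : u ∈ V <;> simp [hv, hu]
      · intro u hu; simp [hw, patch, hu]
    have e2 : (∑ σ : {u // u ∈ I} → X, q (V ∪ I) z (setOn w I σ))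
        = ∑ σ : {u // u ∈ I} → X, q (V ∪ I) z (setOn a I σ) := by
      refine Finset.sum_congr rfl fun σ _ => ?_
      apply hq.isLocal _ _ _ _ _ (fun _ _ => rfl)
      intro u hu
      simp only [setOn, hw, patch]
      by_cases hi : u ∈ I <;> simp [hi]
    have e3 : q V (patch z I w) w = q V (patch z I y) a := by
      apply hq.isLocal
      · intro u hu
        simp only [patch, hw]
        by_cases hi : u ∈ I <;> simp [hi]
      · intro u hu
        have hi : u ∉ I := fun h => (Finset.disjoint_left.mp hVI hu) h
        simp [hw, patch, hi]
    have e4 : (∑ β : {u // u ∈ V} → X, q (V ∪ I) z (setOn w V β)) = U := by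
      rw [hU]
      refine Finset.sum_congr rfl fun β _ => ?_
      apply hq.isLocal _ _ _ _ _ (fun _ _ => rfl)
      intro u hu
      simp only [setOn, hw, patch]
      by_cases hv : u ∈ V
      · simp [hv]
      · have hi := (Finset.mem_union.mp hu).resolve_left hv
        simp [hv, hi]
    rw [e1, e2] at h1
    rw [e3, e4] at h2
    rw [← h1, h2]
  -- double sum is one
  have hsum1 : ∑ α : {u // u ∈ V} → X,
      ∑ σ : {u // u ∈ I} → X, q (V ∪ I) z (setOn (setOn x V α) I σ) = 1 := by
    let e := prodPiEquiv (X := X) V I hVI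
    calc ∑ α : {u // u ∈ V} → X, ∑ σ : {u // u ∈ I} → X,
            q (V ∪ I) z (setOn (setOn x V α) I σ)
        = ∑ p : ({u // u ∈ V} → X) × ({u // u ∈ I} → X),
            q (V ∪ I) z (setOn (setOn x V p.1) I p.2) := by
          rw [Fintype.sum_prod_type]
      _ = ∑ τ : {u // u ∈ V ∪ I} → X, q (V ∪ I) z (setOn x (V ∪ I) τ) := by
          refine Fintype.sum_equiv e _ _ fun p => ?_
          apply hq.isLocal _ _ _ _ _ (fun _ _ => rfl)
          intro u hu
          simp only [setOn, e, prodPiEquiv, Equiv.coe_fn_mk]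
          rcases Finset.mem_union.mp hu with hv | hi
          · have hi : u ∉ I := fun h => (Finset.disjoint_left.mp hVI hv) h
            simp [hv, hi, hu]
          · have hv : u ∉ V := fun h => Finset.disjoint_left.mp hVI h hi
            simp [hv, hi, hu]
      _ = 1 := hq.sum_one _ _ _
  have hratio : ∀ a : S → X,
      q V (patch z I y) a / q I (patch z V a) y
        = (∑ σ : {u // u ∈ I} → X, q (V ∪ I) z (setOn a I σ)) / U := by
    intro a
    have hI := (hpos I (patch z V a) y).ne'
    field_simp
    linarith [key a]
  have hS : (∑ α : {u // u ∈ V} → X,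
      q V (patch z I y) (setOn x V α) / q I (patch z V (setOn x V α)) y) = 1 / U := by
    calc _ = ∑ α : {u // u ∈ V} → X,
            (∑ σ : {u // u ∈ I} → X, q (V ∪ I) z (setOn (setOn x V α) I σ)) / U := by
          exact Finset.sum_congr rfl fun α _ => hratio _
      _ = (∑ α : {u // u ∈ V} → X,
            ∑ σ : {u // u ∈ I} → X, q (V ∪ I) z (setOn (setOn x V α) I σ)) / U := by
          rw [Finset.sum_div]
      _ = 1 / U := by rw [hsum1]
  rw [hS, hratio x]
  field_simp
end
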